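/- arXiv:1905.01001 — 6 statements merged into one kernel-verified Lean document; each statement's English description precedes it below -/
import Mathlib

section
/- Let Λ be a finite k-graph, u a vertex of Λ, and E ⊆ uΛ^1 a finite exhaustive set. Let i ∈ {1,…,k} and e ∈ uΛ^{e_i}. If there exists a path μ with r(μ) = s(e) and d(μ) ∈ ℕe_i such that s(μ) is an absolute source (so that eμ ∈ uΛ^{ℕe_i}), then e ∈ E. -/
/-!
Exhaustiveness of `E`, applied to the path `eμ`, yields `f ∈ E` and a minimal common extension
`eμα = fβ`. If `d(f) = e_i = d(e)`, unique factorisation of this common extension forces `f = e`.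
If `d(f) = e_j` with `j ≠ i`, then `d(eμ) = (m + 1)e_i` and `e_j` have disjoint supports, so
`d(α) = e_j`: an edge out of the absolute source `s(μ)`, which is impossible.
-/

/-- A `k`-graph: a countable small category `Λ` together with a degree functor
`d : Λ → ℕ^k` satisfying the unique factorisation property.  A morphism in
`Hom u v` is a path with range `u` and source `v` (so `Hom u v = uΛv`), and
`comp μ ν = μν` is defined when `s(μ) = r(ν)`. -/
structure KGraph (k : ℕ) where
  Obj : Type
  Hom : Obj → Obj → Type
  id : ∀ v : Obj, Hom v v
  comp : ∀ {u v w : Obj}, Hom u v → Hom v w → Hom u w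
  id_comp : ∀ {u v : Obj} (f : Hom u v), comp (id u) f = f
  comp_id : ∀ {u v : Obj} (f : Hom u v), comp f (id v) = f
  assoc : ∀ {u v w x : Obj} (f : Hom u v) (g : Hom v w) (h : Hom w x),
    comp (comp f g) h = comp f (comp g h)
  countable : Countable (Σ u : Obj, Σ v : Obj, Hom u v)
  deg : ∀ {u v : Obj}, Hom u v → Fin k → ℕ
  deg_id : ∀ v : Obj, deg (id v) = 0
  deg_comp : ∀ {u v w : Obj} (f : Hom u v) (g : Hom v w),
    deg (comp f g) = deg f + deg g
  factor : ∀ {u v : Obj} (f : Hom u v) (m n : Fin k → ℕ), deg f = m + n →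
    ∃! p : Σ w : Obj, Hom u w × Hom w v,
      deg p.2.1 = m ∧ deg p.2.2 = n ∧ comp p.2.1 p.2.2 = f

namespace KGraph

variable {k : ℕ}

/-- Paths with range `u`: the set `uΛ`. -/
abbrev PathFrom (Λ : KGraph k) (u : Λ.Obj) : Type := Σ v : Λ.Obj, Λ.Hom u v

/-- Paths with source `u`: the set `Λu`. -/
abbrev PathTo (Λ : KGraph k) (u : Λ.Obj) : Type := Σ v : Λ.Obj, Λ.Hom v u

/-- All paths of `Λ`. -/
abbrev Path (Λ : KGraph k) : Type := Σ u : Λ.Obj, Σ v : Λ.Obj, Λ.Hom u v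

/-- `Λ` is finite if `Λ^n` is finite for every `n ∈ ℕ^k`. -/
def IsFinite (Λ : KGraph k) : Prop :=
  ∀ n : Fin k → ℕ, {p : Λ.Path | Λ.deg p.2.2 = n}.Finite

/-- The standard generator `e_i` of `ℕ^k`. -/
def gen (k : ℕ) (i : Fin k) : Fin k → ℕ := Pi.single i 1

/-- The set of edges with range `u`: `uΛ^1 = ⋃ᵢ uΛ^{eᵢ}`. -/
def edges (Λ : KGraph k) (u : Λ.Obj) : Set (Λ.PathFrom u) :=
  {e | ∃ i : Fin k, Λ.deg e.2 = gen k i}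

/-- The set `Λ^min(μ,ν)` of minimal common extensions of `μ` and `ν`:
pairs `(α, β)` with `μα = νβ` and `d(μα) = d(μ) ∨ d(ν)`. -/
def MCE (Λ : KGraph k) {u a b : Λ.Obj} (μ : Λ.Hom u a) (ν : Λ.Hom u b) :
    Set (Σ x : Λ.Obj, Λ.Hom a x × Λ.Hom b x) :=
  {p | Λ.comp μ p.2.1 = Λ.comp ν p.2.2 ∧
    Λ.deg (Λ.comp μ p.2.1) = Λ.deg μ ⊔ Λ.deg ν}

/-- `E` is a finite exhaustive subset of `uΛ^1`: for every `μ ∈ uΛ` there is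
`e ∈ E` with `Λ^min(μ,e) ≠ ∅`. -/
def IsExhaustive (Λ : KGraph k) (u : Λ.Obj) (E : Set (Λ.PathFrom u)) : Prop :=
  E ⊆ Λ.edges u ∧ E.Finite ∧
    ∀ μ : Λ.PathFrom u, ∃ e ∈ E, (Λ.MCE μ.2 e.2).Nonempty

/-- `v` is an absolute source: `vΛ^{eᵢ} = ∅` for all `i`. -/
def IsAbsoluteSource (Λ : KGraph k) (v : Λ.Obj) : Prop :=
  ∀ (w : Λ.Obj) (f : Λ.Hom v w) (i : Fin k), Λ.deg f ≠ gen k i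

end KGraph

namespace KGraph

variable {k : ℕ} (Λ : KGraph k)

theorem deg_add_deg_eq_sup_of_mem_MCE {u a b : Λ.Obj} {μ : Λ.Hom u a} {ν : Λ.Hom u b}
    {p : Σ x : Λ.Obj, Λ.Hom a x × Λ.Hom b x} (hp : p ∈ Λ.MCE μ ν) :
    Λ.deg μ + Λ.deg p.2.1 = Λ.deg μ ⊔ Λ.deg ν := by
  rw [← Λ.deg_comp]
  exact hp.2

theorem pathFrom_eq_of_comp_eq_of_deg_eq {u a b x : Λ.Obj} {μ : Λ.Hom u a} {ν : Λ.Hom u b}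
    {α : Λ.Hom a x} {β : Λ.Hom b x} (hcomp : Λ.comp μ α = Λ.comp ν β)
    (hdeg : Λ.deg μ = Λ.deg ν) : (⟨a, μ⟩ : Λ.PathFrom u) = ⟨b, ν⟩ := by
  have hdegα : Λ.deg α = Λ.deg β := by
    have h := congrArg Λ.deg hcomp
    rw [Λ.deg_comp, Λ.deg_comp, hdeg] at h
    exact add_left_cancel h
  obtain ⟨_, _, huniq⟩ := Λ.factor (Λ.comp μ α) (Λ.deg μ) (Λ.deg α) (Λ.deg_comp μ α)
  have hfactor : (⟨a, μ, α⟩ : Σ w : Λ.Obj, Λ.Hom u w × Λ.Hom w x) = ⟨b, ν, β⟩ :=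
    (huniq _ ⟨rfl, rfl, rfl⟩).trans (huniq _ ⟨hdeg.symm, hdegα.symm, hcomp.symm⟩).symm
  exact congrArg (fun q : Σ w : Λ.Obj, Λ.Hom u w × Λ.Hom w x => (⟨q.1, q.2.1⟩ : Λ.PathFrom u))
    hfactor

theorem nsmul_gen_sup_gen_of_ne {i j : Fin k} (hji : j ≠ i) (n : ℕ) :
    n • gen k i ⊔ gen k j = n • gen k i + gen k j := by
  funext l
  simp only [Pi.sup_apply, Pi.add_apply, Pi.smul_apply, smul_eq_mul, gen, Pi.single_apply]
  by_cases hli : l = i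
  · subst hli
    simp [hji.symm]
  · simp [hli]

end KGraph

theorem statement0_general {k : ℕ} (Λ : KGraph k)
    (u : Λ.Obj) (E : Set (Λ.PathFrom u)) (hE : Λ.IsExhaustive u E)
    (i : Fin k) (v : Λ.Obj) (e : Λ.Hom u v) (he : Λ.deg e = KGraph.gen k i)
    (w : Λ.Obj) (μ : Λ.Hom v w) (hμ : ∃ m : ℕ, Λ.deg μ = m • KGraph.gen k i)
    (hw : Λ.IsAbsoluteSource w) :
    (⟨v, e⟩ : Λ.PathFrom u) ∈ E := by
  obtain ⟨m, hm⟩ := hμ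
  obtain ⟨⟨v', f⟩, hfE, p, hp⟩ := hE.2.2 ⟨w, Λ.comp e μ⟩
  obtain ⟨j, hj⟩ := hE.1 hfE
  rcases eq_or_ne j i with rfl | hji
  · have hef : (⟨v, e⟩ : Λ.PathFrom u) = ⟨v', f⟩ :=
      Λ.pathFrom_eq_of_comp_eq_of_deg_eq (α := Λ.comp μ p.2.1) (β := p.2.2)
        (by rw [← Λ.assoc]; exact hp.1) (he.trans hj.symm)
    rwa [hef]
  · have hα := Λ.deg_add_deg_eq_sup_of_mem_MCE hp
    rw [Λ.deg_comp, he, hm, ← succ_nsmul', hj, KGraph.nsmul_gen_sup_gen_of_ne hji] at hα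
    exact (hw _ _ j (add_left_cancel hα)).elim

/-- If `Λ` is a finite `k`-graph, `E ⊆ uΛ^1` is a finite exhaustive set,
`e ∈ uΛ^{e_i}`, and there is a path `μ` with `r(μ) = s(e)`, `d(μ) ∈ ℕe_i`,
whose source is an absolute source, then `e ∈ E`. -/
theorem statement0 {k : ℕ} (Λ : KGraph k) (hΛ : Λ.IsFinite)
    (u : Λ.Obj) (E : Set (Λ.PathFrom u)) (hE : Λ.IsExhaustive u E)
    (i : Fin k) (v : Λ.Obj) (e : Λ.Hom u v) (he : Λ.deg e = KGraph.gen k i)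
    (w : Λ.Obj) (μ : Λ.Hom v w) (hμ : ∃ m : ℕ, Λ.deg μ = m • KGraph.gen k i)
    (hw : Λ.IsAbsoluteSource w) :
    (⟨v, e⟩ : Λ.PathFrom u) ∈ E :=
  statement0_general Λ u E hE i v e he w μ hμ hw
end

section
/- Let Λ be a finite 2-graph with exactly three vertices u, v, w such that |uΛ^{e_1}u| = d_1, |uΛ^{e_2}u| = d_2, |uΛ^{e_1}v| = a_1, |uΛ^{e_2}v| = a_2, |uΛ^{e_1}w| = b_1, |vΛ^{e_2}w| = b_2 with d_1, d_2, a_1, a_2, b_1, b_2 ≥ 1, and all other edge sets xΛ^{e_i}y are empty (in particular vΛ^{e_1} = ∅ and wΛ^{e_1} = wΛ^{e_2} = ∅, so w is an absolute source). Then E := (uΛ^{e_1}u ∪ uΛ^{e_2}u) ∪ uΛ^{e_2}v ∪ uΛ^{e_1}w is an exhaustive subset of uΛ^1, and every finite exhaustive subset of uΛ^1 contains E. -/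
/-- The set `E = uΛ^1u ∪ uΛ^{e₂}v ∪ uΛ^{e₁}w` of edges with range `u`. -/
def Eset (Λ : KGraph 2) (u v w : Λ.Obj) : Set (Λ.PathFrom u) :=
  {e | (e.1 = u ∧ (Λ.deg e.2 = KGraph.gen 2 0 ∨ Λ.deg e.2 = KGraph.gen 2 1)) ∨
       (e.1 = v ∧ Λ.deg e.2 = KGraph.gen 2 1) ∨
       (e.1 = w ∧ Λ.deg e.2 = KGraph.gen 2 0)}

namespace KGraph

variable {k : ℕ}

theorem gen_le_iff {j : Fin k} {n : Fin k → ℕ} : gen k j ≤ n ↔ 1 ≤ n j := by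
  refine ⟨fun h => by simpa [gen] using h j, fun h i => ?_⟩
  rcases eq_or_ne i j with rfl | hij
  · simpa [gen] using h
  · simp [gen, Pi.single_eq_of_ne hij]

theorem add_gen_eq_sup {j : Fin k} {n : Fin k → ℕ} (h : n j = 0) :
    n + gen k j = n ⊔ gen k j := by
  funext i
  rcases eq_or_ne i j with rfl | hij
  · simp [gen, h]
  · simp [gen, Pi.single_eq_of_ne hij]

theorem IsFinite.finite_edges {Λ : KGraph k} (hΛ : Λ.IsFinite) (u : Λ.Obj) :
    (Λ.edges u).Finite := by
  have hfin : (⋃ i, {p : Λ.Path | Λ.deg p.2.2 = gen k i}).Finite :=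
    Set.finite_iUnion fun i => hΛ (gen k i)
  refine (hfin.preimage sigma_mk_injective.injOn).subset ?_
  rintro e ⟨i, hi⟩
  exact Set.mem_iUnion.mpr ⟨i, hi⟩

variable (Λ : KGraph k)

theorem pathFrom_eq_id_of_deg_eq_zero {a b : Λ.Obj} (f : Λ.Hom a b) (h : Λ.deg f = 0) :
    (⟨b, f⟩ : Λ.PathFrom a) = ⟨a, Λ.id a⟩ := by
  obtain ⟨p, -, hp⟩ := Λ.factor f 0 0 (by simpa using h)
  have hfac := (hp ⟨b, f, Λ.id b⟩ ⟨h, Λ.deg_id b, Λ.comp_id f⟩).trans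
    (hp ⟨a, Λ.id a, f⟩ ⟨Λ.deg_id a, h, Λ.id_comp f⟩).symm
  exact congrArg (fun q => (⟨q.1, q.2.1⟩ : Λ.PathFrom a)) hfac

theorem pathFrom_eq_of_comp_eq_of_deg_eq_s2 {u x a b : Λ.Obj} {g₁ : Λ.Hom u a} {σ₁ : Λ.Hom a x}
    {g₂ : Λ.Hom u b} {σ₂ : Λ.Hom b x} (hc : Λ.comp g₁ σ₁ = Λ.comp g₂ σ₂)
    (hg : Λ.deg g₁ = Λ.deg g₂) : (⟨a, g₁⟩ : Λ.PathFrom u) = ⟨b, g₂⟩ := by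
  have hσ : Λ.deg σ₁ = Λ.deg σ₂ := by
    have := congrArg Λ.deg hc
    rw [Λ.deg_comp, Λ.deg_comp, hg] at this
    exact add_left_cancel this
  obtain ⟨p, -, hp⟩ := Λ.factor (Λ.comp g₂ σ₂) (Λ.deg g₂) (Λ.deg σ₂) (Λ.deg_comp g₂ σ₂)
  have hfac := (hp ⟨a, g₁, σ₁⟩ ⟨hg, hσ, hc⟩).trans (hp ⟨b, g₂, σ₂⟩ ⟨rfl, rfl, rfl⟩).symm
  exact congrArg (fun q => (⟨q.1, q.2.1⟩ : Λ.PathFrom u)) hfac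

theorem exists_comp_eq_of_le {a b : Λ.Obj} (f : Λ.Hom a b) {m : Fin k → ℕ}
    (hm : m ≤ Λ.deg f) :
    ∃ (z : Λ.Obj) (g : Λ.Hom a z) (σ : Λ.Hom z b), Λ.deg g = m ∧ Λ.comp g σ = f := by
  obtain ⟨⟨z, g, σ⟩, ⟨hg, -, hc⟩, -⟩ :=
    Λ.factor f m (Λ.deg f - m) (add_tsub_cancel_of_le hm).symm
  exact ⟨z, g, σ, hg, hc⟩

theorem exists_edge_comp_eq {a b : Λ.Obj} (f : Λ.Hom a b) {j : Fin k} (hf : Λ.deg f j ≠ 0) :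
    ∃ (z : Λ.Obj) (g : Λ.Hom a z) (σ : Λ.Hom z b), Λ.deg g = gen k j ∧ Λ.comp g σ = f :=
  Λ.exists_comp_eq_of_le f (gen_le_iff.mpr (Nat.one_le_iff_ne_zero.mpr hf))

theorem deg_apply_eq_zero {a b : Λ.Obj} (f : Λ.Hom a b) {j : Fin k}
    (ha : ∀ (z : Λ.Obj) (g : Λ.Hom a z), Λ.deg g ≠ gen k j) : Λ.deg f j = 0 := by
  by_contra hf
  obtain ⟨z, g, -, hg, -⟩ := Λ.exists_edge_comp_eq f hf
  exact ha z g hg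

theorem mce_nonempty_of_comp_eq {a b z : Λ.Obj} {μ : Λ.Hom a b} {g : Λ.Hom a z}
    {σ : Λ.Hom z b} (h : Λ.comp g σ = μ) : (Λ.MCE μ g).Nonempty := by
  refine ⟨⟨b, Λ.id b, σ⟩, by rw [Λ.comp_id, h], ?_⟩
  rw [Λ.comp_id, eq_comm, sup_eq_left, ← h, Λ.deg_comp]
  exact le_self_add

theorem exists_mce_nonempty_of_comp {a b c : Λ.Obj} (μ : Λ.Hom a b) (ε : Λ.Hom b c)
    {j : Fin k} (hμ : Λ.deg μ j = 0) (hε : Λ.deg ε = gen k j) :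
    ∃ (z : Λ.Obj) (h : Λ.Hom a z), Λ.deg h = gen k j ∧ (Λ.MCE μ h).Nonempty := by
  have hdeg : Λ.deg (Λ.comp μ ε) = Λ.deg μ + gen k j := by rw [Λ.deg_comp, hε]
  obtain ⟨z, h, τ, hh, hc⟩ :=
    Λ.exists_comp_eq_of_le (Λ.comp μ ε) (hdeg ▸ le_add_self)
  refine ⟨z, h, hh, ⟨c, ε, τ⟩, hc.symm, ?_⟩
  rw [hdeg, hh]
  exact add_gen_eq_sup hμ

theorem exists_comp_eq_of_mem_mce {u a b : Λ.Obj} {μ : Λ.Hom u a} {ν : Λ.Hom u b}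
    {p : Σ x : Λ.Obj, Λ.Hom a x × Λ.Hom b x} (hp : p ∈ Λ.MCE μ ν) (hle : Λ.deg ν ≤ Λ.deg μ) :
    ∃ β : Λ.Hom b a, Λ.comp ν β = μ := by
  obtain ⟨x, α, β⟩ := p
  obtain ⟨hc, hd⟩ := hp
  have hα : Λ.deg α = 0 := by
    rwa [Λ.deg_comp, sup_eq_left.mpr hle, add_eq_left] at hd
  obtain ⟨⟩ := Λ.pathFrom_eq_id_of_deg_eq_zero α hα
  exact ⟨β, by rw [← hc, Λ.comp_id]⟩

theorem mem_of_isExhaustive {u b x : Λ.Obj} {F : Set (Λ.PathFrom u)} (hF : Λ.IsExhaustive u F)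
    {i : Fin k} (f : Λ.Hom u b) (hf : Λ.deg f = gen k i) (σ : Λ.Hom b x)
    (hσ : ∀ j ≠ i, Λ.deg σ j = 0)
    (hx : ∀ j ≠ i, ∀ (y : Λ.Obj) (g : Λ.Hom x y), Λ.deg g ≠ gen k j) :
    (⟨b, f⟩ : Λ.PathFrom u) ∈ F := by
  obtain ⟨hFedges, -, hFex⟩ := hF
  obtain ⟨⟨c, e⟩, heF, ⟨y, α, β⟩, hc, hd⟩ := hFex ⟨x, Λ.comp f σ⟩
  obtain ⟨j, hj⟩ := hFedges heF
  rcases eq_or_ne j i with rfl | hji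
  · obtain ⟨γ, hγ⟩ := Λ.exists_comp_eq_of_mem_mce ⟨hc, hd⟩
      (by rw [hj, ← hf, Λ.deg_comp]; exact le_self_add)
    rwa [Λ.pathFrom_eq_of_comp_eq_of_deg_eq_s2 hγ (hj.trans hf.symm)] at heF
  · have hμ : Λ.deg (Λ.comp f σ) j = 0 := by
      rw [Λ.deg_comp, Pi.add_apply, hf, hσ j hji, gen, Pi.single_eq_of_ne hji]
    have hα : Λ.deg α = gen k j := by
      dsimp only at hj hd
      rw [Λ.deg_comp, hj, ← add_gen_eq_sup hμ] at hd
      exact add_left_cancel hd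
    exact (hx j hji y α hα).elim

section ThreeVertices

variable {Λ : KGraph 2} {u v w : Λ.Obj}

theorem eset_subset_edges : Eset Λ u v w ⊆ Λ.edges u := by
  rintro ⟨z, f⟩ (⟨-, hf | hf⟩ | ⟨-, hf⟩ | ⟨-, hf⟩)
  exacts [⟨0, hf⟩, ⟨1, hf⟩, ⟨1, hf⟩, ⟨0, hf⟩]

theorem mem_eset_of_deg_eq_gen_one
    (hu : ∀ (z : Λ.Obj) (f : Λ.Hom u z), Λ.deg f = gen 2 1 → z = u ∨ z = v)
    {z : Λ.Obj} {f : Λ.Hom u z} (hf : Λ.deg f = gen 2 1) :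
    (⟨z, f⟩ : Λ.PathFrom u) ∈ Eset Λ u v w := by
  rcases hu z f hf with rfl | rfl
  · exact Or.inl ⟨rfl, Or.inr hf⟩
  · exact Or.inr (Or.inl ⟨rfl, hf⟩)

theorem exists_mem_eset_mce_nonempty (hall : ∀ x : Λ.Obj, x = u ∨ x = v ∨ x = w)
    (hu : ∀ (z : Λ.Obj) (f : Λ.Hom u z), Λ.deg f = gen 2 1 → z = u ∨ z = v)
    (hv : ∀ (z : Λ.Obj) (f : Λ.Hom v z), Λ.deg f ≠ gen 2 0)
    {a : Λ.Hom u v} (ha : Λ.deg a = gen 2 1) {c : Λ.Hom v w} (hc : Λ.deg c = gen 2 1)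
    (μ : Λ.PathFrom u) : ∃ e ∈ Eset Λ u v w, (Λ.MCE μ.2 e.2).Nonempty := by
  obtain ⟨x, μ⟩ := μ
  have of_extension : ∀ {y : Λ.Obj} (ε : Λ.Hom x y), Λ.deg μ 1 = 0 → Λ.deg ε = gen 2 1 →
      ∃ e ∈ Eset Λ u v w, (Λ.MCE μ e.2).Nonempty := by
    intro y ε hμ hε
    obtain ⟨z, h, hh, hne⟩ := Λ.exists_mce_nonempty_of_comp μ ε hμ hε
    exact ⟨⟨z, h⟩, mem_eset_of_deg_eq_gen_one hu hh, hne⟩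
  by_cases h₁ : Λ.deg μ 1 = 0
  · by_cases h₀ : Λ.deg μ 0 = 0
    · have hμ : Λ.deg μ = 0 := by
        funext i
        fin_cases i
        exacts [h₀, h₁]
      obtain ⟨⟩ := Λ.pathFrom_eq_id_of_deg_eq_zero μ hμ
      exact of_extension a h₁ ha
    obtain ⟨z, g, σ, hg, rfl⟩ := Λ.exists_edge_comp_eq μ h₀
    rcases hall z with hz | rfl | hz
    · exact ⟨⟨z, g⟩, Or.inl ⟨hz, Or.inl hg⟩, Λ.mce_nonempty_of_comp_eq rfl⟩
    · have hσ : Λ.deg σ = 0 := by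
        funext i
        fin_cases i
        · exact Λ.deg_apply_eq_zero σ hv
        · rw [Λ.deg_comp, Pi.add_apply] at h₁
          exact Nat.eq_zero_of_add_eq_zero_left h₁
      obtain ⟨⟩ := Λ.pathFrom_eq_id_of_deg_eq_zero σ hσ
      exact of_extension c h₁ hc
    · exact ⟨⟨z, g⟩, Or.inr (Or.inr ⟨hz, hg⟩), Λ.mce_nonempty_of_comp_eq rfl⟩
  · obtain ⟨z, g, σ, hg, hgσ⟩ := Λ.exists_edge_comp_eq μ h₁
    exact ⟨⟨z, g⟩, mem_eset_of_deg_eq_gen_one hu hg, Λ.mce_nonempty_of_comp_eq hgσ⟩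

theorem eset_subset_of_isExhaustive (hv : ∀ (z : Λ.Obj) (f : Λ.Hom v z), Λ.deg f ≠ gen 2 0)
    (hw : Λ.IsAbsoluteSource w) {a : Λ.Hom u v} (ha : Λ.deg a = gen 2 1)
    {b : Λ.Hom u w} (hb : Λ.deg b = gen 2 0) {F : Set (Λ.PathFrom u)}
    (hF : Λ.IsExhaustive u F) : Eset Λ u v w ⊆ F := by
  have hv_ne : ∀ j ≠ (1 : Fin 2), ∀ (y : Λ.Obj) (g : Λ.Hom v y), Λ.deg g ≠ gen 2 j := by
    intro j hj
    obtain rfl : j = 0 := by omega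
    exact hv
  have hw_ne : ∀ (j : Fin 2) (y : Λ.Obj) (g : Λ.Hom w y), Λ.deg g ≠ gen 2 j :=
    fun j y g => hw y g j
  have hgen : ∀ {i j : Fin 2}, j ≠ i → gen 2 i j = 0 := fun hji => Pi.single_eq_of_ne hji 1
  rintro ⟨z, f⟩ hf
  rcases hf with ⟨hz, hf | hf⟩ | ⟨hz, hf⟩ | ⟨hz, hf⟩ <;> obtain rfl : z = _ := hz
  · exact Λ.mem_of_isExhaustive hF f hf b (fun j hj => hb ▸ hgen hj) (fun j _ => hw_ne j)
  · exact Λ.mem_of_isExhaustive hF f hf a (fun j hj => ha ▸ hgen hj) hv_ne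
  · exact Λ.mem_of_isExhaustive hF f hf (Λ.id _) (fun j _ => by rw [Λ.deg_id]; rfl) hv_ne
  · exact Λ.mem_of_isExhaustive hF f hf (Λ.id _) (fun j _ => by rw [Λ.deg_id]; rfl)
      (fun j _ => hw_ne j)

end ThreeVertices

end KGraph

theorem statement2_general (Λ : KGraph 2) (hΛ : Λ.IsFinite)
    (u v w : Λ.Obj) (huv : u ≠ v) (huw : u ≠ w) (hvw : v ≠ w)
    (hall : ∀ x : Λ.Obj, x = u ∨ x = v ∨ x = w)
    (a₂ b₁ b₂ : ℕ)
    (ha₂ : 1 ≤ a₂)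
    (hb₁ : 1 ≤ b₁) (hb₂ : 1 ≤ b₂)
    (hca₂ : {f : Λ.Hom u v | Λ.deg f = KGraph.gen 2 1}.ncard = a₂)
    (hcb₁ : {f : Λ.Hom u w | Λ.deg f = KGraph.gen 2 0}.ncard = b₁)
    (hcb₂ : {f : Λ.Hom v w | Λ.deg f = KGraph.gen 2 1}.ncard = b₂)
    (hempty : ∀ (x y : Λ.Obj) (i : Fin 2) (f : Λ.Hom x y), Λ.deg f = KGraph.gen 2 i →
      (x = u ∧ y = u) ∨ (x = u ∧ y = v) ∨ (x = u ∧ y = w ∧ i = 0) ∨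
        (x = v ∧ y = w ∧ i = 1)) :
    Λ.IsExhaustive u (Eset Λ u v w) ∧
      ∀ F : Set (Λ.PathFrom u), Λ.IsExhaustive u F → Eset Λ u v w ⊆ F := by
  have hu : ∀ (z : Λ.Obj) (f : Λ.Hom u z), Λ.deg f = KGraph.gen 2 1 → z = u ∨ z = v := by
    intro z f hf
    rcases hempty u z 1 f hf with ⟨-, h⟩ | ⟨-, h⟩ | ⟨-, -, h⟩ | ⟨h, -⟩
    exacts [Or.inl h, Or.inr h, absurd h (by decide), absurd h huv]
  have hv : ∀ (z : Λ.Obj) (f : Λ.Hom v z), Λ.deg f ≠ KGraph.gen 2 0 := by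
    intro z f hf
    rcases hempty v z 0 f hf with ⟨h, -⟩ | ⟨h, -⟩ | ⟨h, -⟩ | ⟨-, -, h⟩
    exacts [huv h.symm, huv h.symm, huv h.symm, absurd h (by decide)]
  have hw : Λ.IsAbsoluteSource w := by
    intro z f i hf
    rcases hempty w z i f hf with ⟨h, -⟩ | ⟨h, -⟩ | ⟨h, -⟩ | ⟨h, -⟩
    exacts [huw h.symm, huw h.symm, huw h.symm, hvw h.symm]
  obtain ⟨a, ha⟩ := Set.nonempty_of_ncard_ne_zero (hca₂.trans_ne (by omega))
  obtain ⟨b, hb⟩ := Set.nonempty_of_ncard_ne_zero (hcb₁.trans_ne (by omega))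
  obtain ⟨c, hc⟩ := Set.nonempty_of_ncard_ne_zero (hcb₂.trans_ne (by omega))
  refine ⟨⟨KGraph.eset_subset_edges, (hΛ.finite_edges u).subset KGraph.eset_subset_edges,
    KGraph.exists_mem_eset_mce_nonempty hall hu hv ha hc⟩, fun F hF => ?_⟩
  exact KGraph.eset_subset_of_isExhaustive hv hw ha hb hF

/-- For the 2-graph of Example 1.5 (three vertices `u, v, w`, with `w` an absolute
source), the set `E = uΛ^1u ∪ uΛ^{e₂}v ∪ uΛ^{e₁}w` is exhaustive, and every finite
exhaustive subset of `uΛ^1` contains `E`. -/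
theorem statement2 (Λ : KGraph 2) (hΛ : Λ.IsFinite)
    (u v w : Λ.Obj) (huv : u ≠ v) (huw : u ≠ w) (hvw : v ≠ w)
    (hall : ∀ x : Λ.Obj, x = u ∨ x = v ∨ x = w)
    (d₁ d₂ a₁ a₂ b₁ b₂ : ℕ)
    (hd₁ : 1 ≤ d₁) (hd₂ : 1 ≤ d₂) (ha₁ : 1 ≤ a₁) (ha₂ : 1 ≤ a₂)
    (hb₁ : 1 ≤ b₁) (hb₂ : 1 ≤ b₂)
    (hcd₁ : {f : Λ.Hom u u | Λ.deg f = KGraph.gen 2 0}.ncard = d₁)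
    (hcd₂ : {f : Λ.Hom u u | Λ.deg f = KGraph.gen 2 1}.ncard = d₂)
    (hca₁ : {f : Λ.Hom u v | Λ.deg f = KGraph.gen 2 0}.ncard = a₁)
    (hca₂ : {f : Λ.Hom u v | Λ.deg f = KGraph.gen 2 1}.ncard = a₂)
    (hcb₁ : {f : Λ.Hom u w | Λ.deg f = KGraph.gen 2 0}.ncard = b₁)
    (hcb₂ : {f : Λ.Hom v w | Λ.deg f = KGraph.gen 2 1}.ncard = b₂)
    (hempty : ∀ (x y : Λ.Obj) (i : Fin 2) (f : Λ.Hom x y), Λ.deg f = KGraph.gen 2 i →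
      (x = u ∧ y = u) ∨ (x = u ∧ y = v) ∨ (x = u ∧ y = w ∧ i = 0) ∨
        (x = v ∧ y = w ∧ i = 1)) :
    Λ.IsExhaustive u (Eset Λ u v w) ∧
      ∀ F : Set (Λ.PathFrom u), Λ.IsExhaustive u F → Eset Λ u v w ⊆ F :=
  statement2_general Λ hΛ u v w huv huw hvw hall a₂ b₁ b₂ ha₂ hb₁ hb₂ hca₂ hcb₁ hcb₂ hempty
end

section
/- Let Λ be a finite 2-graph with exactly two vertices u, v such that |uΛ^{e_1}u| = d_1, |uΛ^{e_2}u| = d_2, |uΛ^{e_1}v| = a_1, |uΛ^{e_2}v| = a_2 with d_1, d_2, a_1, a_2 ≥ 1, and vΛ^{e_1} = vΛ^{e_2} = ∅. Let r = (r_1, r_2) ∈ (0,∞)² and β > 0 satisfy βr_i > ln d_i for i = 1, 2. Then the series y_u := ∑_{μ ∈ Λu} e^{-βr·d(μ)} and y_v := ∑_{μ ∈ Λv} e^{-βr·d(μ)} (sums over all paths with source u, respectively v) converge, with y_u = (1 - d_1 e^{-βr_1})^{-1}(1 - d_2 e^{-βr_2})^{-1} and y_v = 1 + a_1 e^{-βr_1}(1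 - d_1 e^{-βr_1})^{-1}(1 - d_2 e^{-βr_2})^{-1} + a_2 e^{-βr_2}(1 - d_2 e^{-βr_2})^{-1}. -/
/-!
Since `v` receives no edges, a path with range `v` is the vertex `v` itself. So when a path of
degree `m + n` with `n ≠ 0` is factorised, the middle vertex must be `u`, which makes the counts
multiplicative: `|uΛ^n u| = d₁^{n₁} d₂^{n₂}` and `|uΛ^{m + e_i} v| = |uΛ^m u| a_i`. Weighting a path
of degree `n` by `x₁^{n₁} x₂^{n₂}` with `x_i = e^{-βr_i}`, the series `y_u` becomes the product of
the geometric series in `d_i x_i`. In `y_v` the vertex `v` contributes `1`, the paths of degree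
`m + e₁` contribute `a₁ x₁ y_u`, and the remaining ones, of degree `(0, j + 1)`, contribute
`a₂ x₂ ∑_j (d₂ x₂)^j`.
-/

theorem hasSum_sigma_of_nonneg {α : Type*} {β : α → Type*} {f : (Σ a, β a) → ℝ} (hf : 0 ≤ f)
    {g : α → ℝ} {s : ℝ} (hg : ∀ a, HasSum (fun b => f ⟨a, b⟩) (g a)) (h : HasSum g s) :
    HasSum f s :=
  h.sigma_of_hasSum hg <| (summable_sigma_of_nonneg hf).mpr
    ⟨fun a => (hg a).summable, h.summable.congr fun a => (hg a).tsum_eq.symm⟩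

theorem hasSum_comp_of_hasSum_card_fiber_mul {α ι : Type*} {p : α → ι}
    [∀ i, Finite {a // p a = i}] {w : ι → ℝ} (hw : 0 ≤ w) {s : ℝ}
    (h : HasSum (fun i => Nat.card {a // p a = i} * w i) s) : HasSum (fun a => w (p a)) s := by
  refine (Equiv.sigmaFiberEquiv p).hasSum_iff.mp
    (hasSum_sigma_of_nonneg (fun _ => hw _) (fun i => ?_) h)
  have := Fintype.ofFinite {a // p a = i}
  have hfiber : (fun a : {a // p a = i} => w (p a)) = fun _ => w i := funext fun a => by rw [a.2]
  simpa [hfiber, Nat.card_eq_fintype_card] using hasSum_fintype (fun _ : {a // p a = i} => w i)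

theorem hasSum_prod_pow {k : ℕ} {q : Fin k → ℝ} (hq₀ : ∀ i, 0 ≤ q i) (hq₁ : ∀ i, q i < 1) :
    HasSum (fun n : Fin k → ℕ => ∏ i, q i ^ n i) (∏ i, (1 - q i)⁻¹) := by
  induction k with
  | zero => simp
  | succ k ih =>
    have hhead := hasSum_geometric_of_lt_one (hq₀ 0) (hq₁ 0)
    have htail := ih (fun i => hq₀ i.succ) (fun i => hq₁ i.succ)
    have hsummable := hhead.summable.mul_of_nonneg htail.summable
      (fun n => pow_nonneg (hq₀ 0) n) (fun n => Finset.prod_nonneg fun i _ => pow_nonneg (hq₀ _) _)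
    rw [Fin.prod_univ_succ]
    refine (Fin.consEquiv fun _ => ℕ).hasSum_iff.mp ?_
    simpa [Function.comp_def, Fin.prod_univ_succ] using hhead.mul htail hsummable

theorem natCast_mul_exp_neg_lt_one {d : ℕ} {t : ℝ} (h : Real.log d < t) :
    (d : ℝ) * Real.exp (-t) < 1 := by
  rcases d.eq_zero_or_pos with rfl | hd
  · simp
  rw [Real.exp_neg, ← div_eq_mul_inv, div_lt_one (Real.exp_pos t)]
  exact (Real.log_lt_iff_lt_exp (by positivity)).mp h

theorem exp_neg_mul_dotProduct_fin_two (β : ℝ) (r : Fin 2 → ℝ) (n : Fin 2 → ℕ) :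
    Real.exp (-(β * (r 0 * (n 0 : ℝ) + r 1 * (n 1 : ℝ)))) =
      ∏ i, Real.exp (-(β * r i)) ^ n i := by
  simp only [Fin.prod_univ_two, ← Real.exp_nat_mul, ← Real.exp_add]
  ring_nf

namespace KGraph

theorem prod_pow_gen {k : ℕ} {M : Type*} [CommMonoid M] (x : Fin k → M) (i : Fin k) :
    ∏ j, x j ^ gen k i j = x i := by
  simp [gen, Pi.single_apply, pow_ite]

theorem hasSum_of_hasSum_add_gen_fin_two {G : (Fin 2 → ℕ) → ℝ} (hG : G 0 = 0) {a b : ℝ}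
    (h₁ : HasSum (fun m => G (m + gen 2 0)) a)
    (h₂ : HasSum (fun j => G (Pi.single 1 j + gen 2 1)) b) : HasSum G (a + b) := by
  set addGen0 : (Fin 2 → ℕ) → Fin 2 → ℕ := (· + gen 2 0)
  set succGen1 : ℕ → Fin 2 → ℕ := fun j => Pi.single 1 j + gen 2 1
  have haddGen0 : addGen0.Injective := add_left_injective _
  have hsuccGen1 : succGen1.Injective := fun i j h => by simpa [succGen1, gen] using congrFun h 1
  have hdisj : Disjoint (Set.range addGen0) (Set.range succGen1) := by
    refine Set.disjoint_range_iff.mpr fun m j h => ?_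
    simpa [addGen0, succGen1, gen] using congrFun h 0
  have hsupp : Function.support G ⊆ Set.range addGen0 ∪ Set.range succGen1 := by
    intro n hn
    have hn0 : n ≠ 0 := fun h => hn (h ▸ hG)
    by_cases h0 : n 0 = 0
    · refine Or.inr ⟨n 1 - 1, funext fun i => ?_⟩
      have h1 : n 1 ≠ 0 := fun h1 => hn0 (funext fun i => by fin_cases i <;> assumption)
      fin_cases i <;> simp [succGen1, gen, h0]; omega
    · exact Or.inl ⟨n - gen 2 0, funext fun i => by fin_cases i <;> simp [addGen0, gen]; omega⟩
  exact (hasSum_subtype_iff_of_support_subset hsupp).mp <|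
    (haddGen0.hasSum_range_iff.mpr h₁).add_disjoint hdisj (hsuccGen1.hasSum_range_iff.mpr h₂)

section Counting

variable {k : ℕ} {Λ : KGraph k}

abbrev HomOfDeg (Λ : KGraph k) (a c : Λ.Obj) (n : Fin k → ℕ) : Type :=
  {f : Λ.Hom a c // Λ.deg f = n}

noncomputable def homCount (Λ : KGraph k) (a c : Λ.Obj) (n : Fin k → ℕ) : ℕ :=
  Nat.card (Λ.HomOfDeg a c n)

theorem sigma_mk_id_eq_of_deg_eq_zero {a b : Λ.Obj} {f : Λ.Hom a b} (hf : Λ.deg f = 0) :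
    (⟨b, f, Λ.id b⟩ : Σ w, Λ.Hom a w × Λ.Hom w b) = ⟨a, Λ.id a, f⟩ :=
  (Λ.factor f 0 0 (by rw [hf, add_zero])).unique ⟨hf, Λ.deg_id b, Λ.comp_id f⟩
    ⟨Λ.deg_id a, hf, Λ.id_comp f⟩

theorem eq_of_deg_eq_zero {a b : Λ.Obj} {f : Λ.Hom a b} (hf : Λ.deg f = 0) : a = b :=
  (congrArg Sigma.fst (sigma_mk_id_eq_of_deg_eq_zero hf)).symm

theorem eq_id_of_deg_eq_zero {a : Λ.Obj} {f : Λ.Hom a a} (hf : Λ.deg f = 0) :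
    f = Λ.id a :=
  (Prod.ext_iff.mp (eq_of_heq (Sigma.mk.inj_iff.mp (sigma_mk_id_eq_of_deg_eq_zero hf)).2)).1

theorem exists_edge_of_deg_ne_zero {a b : Λ.Obj} {f : Λ.Hom a b} (hf : Λ.deg f ≠ 0) :
    ∃ (i : Fin k) (w : Λ.Obj) (e : Λ.Hom a w), Λ.deg e = gen k i := by
  obtain ⟨i, hi⟩ := Function.ne_iff.mp hf
  have hle : gen k i ≤ Λ.deg f := fun j => by
    rcases eq_or_ne j i with rfl | hj
    · simpa [gen, Nat.one_le_iff_ne_zero] using hi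
    · simp [gen, hj]
  obtain ⟨⟨w, e, _⟩, ⟨he, -⟩, -⟩ := Λ.factor f _ _ (add_tsub_cancel_of_le hle).symm
  exact ⟨i, w, e, he⟩

theorem IsAbsoluteSource.deg_eq_zero {v w : Λ.Obj} (hv : Λ.IsAbsoluteSource v)
    (f : Λ.Hom v w) : Λ.deg f = 0 := by
  by_contra hf
  obtain ⟨i, w', e, he⟩ := exists_edge_of_deg_ne_zero hf
  exact hv w' e i he

theorem homCount_self_zero (a : Λ.Obj) : Λ.homCount a a 0 = 1 :=
  have : Unique (Λ.HomOfDeg a a 0) :=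
    { default := ⟨Λ.id a, Λ.deg_id a⟩
      uniq := fun f => Subtype.ext (eq_id_of_deg_eq_zero f.2) }
  Nat.card_unique

theorem homCount_zero_of_ne {a c : Λ.Obj} (hac : a ≠ c) : Λ.homCount a c 0 = 0 :=
  have : IsEmpty (Λ.HomOfDeg a c 0) := ⟨fun f => hac (eq_of_deg_eq_zero f.2)⟩
  Nat.card_of_isEmpty

theorem finite_homOfDeg (hΛ : Λ.IsFinite) (a c : Λ.Obj) (n : Fin k → ℕ) :
    Finite (Λ.HomOfDeg a c n) :=
  have := (hΛ n).to_subtype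
  Finite.of_injective (fun f => (⟨⟨a, c, f.1⟩, f.2⟩ : {p : Λ.Path | Λ.deg p.2.2 = n}))
    fun f g hfg => Subtype.ext (by simpa using hfg)

noncomputable def factorEquiv (a c : Λ.Obj) (m n : Fin k → ℕ) :
    (Σ w, Λ.HomOfDeg a w m × Λ.HomOfDeg w c n) ≃ Λ.HomOfDeg a c (m + n) :=
  Equiv.ofBijective
    (fun p => ⟨Λ.comp p.2.1.1 p.2.2.1, by rw [Λ.deg_comp, p.2.1.2, p.2.2.2]⟩) <| by
    constructor
    · rintro ⟨w, ⟨g, hg⟩, ⟨h, hh⟩⟩ ⟨w', ⟨g', hg'⟩, ⟨h', hh'⟩⟩ hcomp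
      have hfac := (Λ.factor (Λ.comp g h) m n (by rw [Λ.deg_comp, hg, hh])).unique
        (y₁ := ⟨w, g, h⟩) (y₂ := ⟨w', g', h'⟩) ⟨hg, hh, rfl⟩
        ⟨hg', hh', (congrArg Subtype.val hcomp).symm⟩
      obtain ⟨rfl, hgh⟩ := Sigma.mk.inj_iff.mp hfac
      obtain ⟨rfl, rfl⟩ := Prod.ext_iff.mp (eq_of_heq hgh)
      rfl
    · rintro ⟨f, hf⟩
      obtain ⟨⟨w, g, h⟩, ⟨hg, hh, rfl⟩, -⟩ := Λ.factor f m n hf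
      exact ⟨⟨w, ⟨g, hg⟩, ⟨h, hh⟩⟩, rfl⟩

variable {u : Λ.Obj} (hsrc : ∀ w, w ≠ u → Λ.IsAbsoluteSource w)
include hsrc

theorem homCount_add_of_ne_zero (a c : Λ.Obj) (m : Fin k → ℕ) {n : Fin k → ℕ} (hn : n ≠ 0) :
    Λ.homCount a c (m + n) = Λ.homCount a u m * Λ.homCount u c n := by
  rw [homCount, ← Nat.card_congr (factorEquiv a c m n), homCount, homCount, ← Nat.card_prod]
  refine (Nat.card_congr (Equiv.ofBijective (Sigma.mk u) ⟨sigma_mk_injective, ?_⟩)).symm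
  rintro ⟨w, g, h⟩
  obtain rfl : w = u := by
    by_contra hw
    exact hn (h.2 ▸ (hsrc w hw).deg_eq_zero h.1)
  exact ⟨(g, h), rfl⟩

theorem homCount_self_add (m n : Fin k → ℕ) :
    Λ.homCount u u (m + n) = Λ.homCount u u m * Λ.homCount u u n := by
  rcases eq_or_ne n 0 with rfl | hn
  · rw [add_zero, homCount_self_zero, mul_one]
  · exact homCount_add_of_ne_zero hsrc u u m hn

theorem homCount_self_eq_prod_pow (n : Fin k → ℕ) :
    Λ.homCount u u n = ∏ i, Λ.homCount u u (gen k i) ^ n i := by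
  set F := fun n : Fin k → ℕ => ∏ i, Λ.homCount u u (gen k i) ^ n i with hF
  have hF_add (m n : Fin k → ℕ) : F (m + n) = F m * F n := by
    simp only [hF, Pi.add_apply, pow_add, Finset.prod_mul_distrib]
  have hF_gen (i : Fin k) : F (gen k i) = Λ.homCount u u (gen k i) := prod_pow_gen _ i
  refine Pi.single_induction (fun n => Λ.homCount u u n = F n) n ?_ ?_ ?_
  · simp [hF, homCount_self_zero]
  · intro m n hm hn
    rw [homCount_self_add hsrc, hm, hn, hF_add]
  · intro i j
    induction j with
    | zero => simp [hF, homCount_self_zero]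
    | succ j ih =>
      rw [Pi.single_add (f := fun _ => ℕ) i j 1, ← gen, homCount_self_add hsrc, ih, hF_add, hF_gen]

theorem homCount_add_gen_mul_prod_pow (c : Λ.Obj) (x : Fin k → ℝ) (m : Fin k → ℕ) (i : Fin k) :
    (Λ.homCount u c (m + gen k i) : ℝ) * ∏ j, x j ^ (m + gen k i) j =
      Λ.homCount u c (gen k i) * x i * ∏ j, (Λ.homCount u u (gen k j) * x j) ^ m j := by
  have hgen : gen k i ≠ 0 := fun h => by simpa [gen] using congrFun h i
  rw [homCount_add_of_ne_zero hsrc u c m hgen, homCount_self_eq_prod_pow hsrc]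
  simp only [Pi.add_apply, pow_add, Nat.cast_mul, Nat.cast_prod, Nat.cast_pow, mul_pow,
    Finset.prod_mul_distrib, prod_pow_gen]
  ring

end Counting

section Series

variable {k : ℕ} {Λ : KGraph k}

theorem hasSum_pathTo_of_hasSum_hom {u v : Λ.Obj} (huv : u ≠ v)
    (hall : ∀ x : Λ.Obj, x = u ∨ x = v) {W : (Fin k → ℕ) → ℝ} (hW : 0 ≤ W) {c : Λ.Obj}
    {a b : ℝ} (hu : HasSum (fun f : Λ.Hom u c => W (Λ.deg f)) a)
    (hv : HasSum (fun f : Λ.Hom v c => W (Λ.deg f)) b) :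
    HasSum (fun μ : Λ.PathTo c => W (Λ.deg μ.2)) (a + b) := by
  classical
  have hw (w : Λ.Obj) :
      HasSum (fun f : Λ.Hom w c => W (Λ.deg f)) (if w = u then a else b) := by
    rcases hall w with rfl | rfl
    · simpa using hu
    · simpa [huv.symm] using hv
  refine hasSum_sigma_of_nonneg (fun μ => hW _) hw ?_
  convert hasSum_sum_of_ne_finset_zero (L := SummationFilter.unconditional _) (s := {u, v})
    fun w hw => ?_
  · simp [Finset.sum_pair huv, huv.symm]
  · rcases hall w with rfl | rfl <;> simp at hw

theorem IsAbsoluteSource.hasSum_hom_self {v : Λ.Obj} (hv : Λ.IsAbsoluteSource v)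
    (W : (Fin k → ℕ) → ℝ) : HasSum (fun f : Λ.Hom v v => W (Λ.deg f)) (W 0) := by
  simpa [Λ.deg_id] using hasSum_single (f := fun f : Λ.Hom v v => W (Λ.deg f)) (Λ.id v)
    fun f hf => absurd (eq_id_of_deg_eq_zero (hv.deg_eq_zero f)) hf

theorem IsAbsoluteSource.hasSum_hom_of_ne {v c : Λ.Obj} (hv : Λ.IsAbsoluteSource v)
    (hvc : v ≠ c) (W : (Fin k → ℕ) → ℝ) : HasSum (fun f : Λ.Hom v c => W (Λ.deg f)) 0 :=
  have : IsEmpty (Λ.Hom v c) := ⟨fun f => hvc (eq_of_deg_eq_zero (hv.deg_eq_zero f))⟩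
  hasSum_empty

variable (hΛ : Λ.IsFinite) {x : Fin k → ℝ} (hx : ∀ i, 0 ≤ x i)
include hΛ hx

theorem hasSum_hom_of_hasSum_homCount_mul {a c : Λ.Obj} {s : ℝ}
    (h : HasSum (fun n => (Λ.homCount a c n : ℝ) * ∏ i, x i ^ n i) s) :
    HasSum (fun f : Λ.Hom a c => ∏ i, x i ^ Λ.deg f i) s :=
  have := finite_homOfDeg hΛ a c
  hasSum_comp_of_hasSum_card_fiber_mul (p := Λ.deg)
    (fun n => Finset.prod_nonneg fun i _ => pow_nonneg (hx i) (n i)) h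

variable {u : Λ.Obj} (hsrc : ∀ w, w ≠ u → Λ.IsAbsoluteSource w)
  (hq : ∀ i, (Λ.homCount u u (gen k i) : ℝ) * x i < 1)
include hsrc hq

theorem hasSum_hom_self :
    HasSum (fun f : Λ.Hom u u => ∏ i, x i ^ Λ.deg f i)
      (∏ i, (1 - Λ.homCount u u (gen k i) * x i)⁻¹) := by
  refine hasSum_hom_of_hasSum_homCount_mul hΛ hx ?_
  have hq₀ (i : Fin k) : 0 ≤ (Λ.homCount u u (gen k i) : ℝ) * x i :=
    mul_nonneg (Nat.cast_nonneg _) (hx i)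
  convert hasSum_prod_pow hq₀ hq using 2 with n
  rw [homCount_self_eq_prod_pow hsrc, Nat.cast_prod, ← Finset.prod_mul_distrib]
  simp only [Nat.cast_pow, mul_pow]

end Series

theorem hasSum_hom_of_ne {Λ : KGraph 2} (hΛ : Λ.IsFinite) {x : Fin 2 → ℝ} (hx : ∀ i, 0 ≤ x i)
    {u v : Λ.Obj} (hsrc : ∀ w, w ≠ u → Λ.IsAbsoluteSource w) (huv : u ≠ v)
    (hq : ∀ i, (Λ.homCount u u (gen 2 i) : ℝ) * x i < 1) :
    HasSum (fun f : Λ.Hom u v => ∏ i, x i ^ Λ.deg f i)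
      (Λ.homCount u v (gen 2 0) * x 0 * ∏ i, (1 - Λ.homCount u u (gen 2 i) * x i)⁻¹ +
        Λ.homCount u v (gen 2 1) * x 1 * (1 - Λ.homCount u u (gen 2 1) * x 1)⁻¹) := by
  have hq₀ (i : Fin 2) : 0 ≤ (Λ.homCount u u (gen 2 i) : ℝ) * x i :=
    mul_nonneg (Nat.cast_nonneg _) (hx i)
  refine hasSum_hom_of_hasSum_homCount_mul hΛ hx <|
    hasSum_of_hasSum_add_gen_fin_two (by simp [homCount_zero_of_ne huv]) ?_ ?_
  · simpa only [homCount_add_gen_mul_prod_pow hsrc] using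
      (hasSum_prod_pow hq₀ hq).mul_left _
  · simp only [homCount_add_gen_mul_prod_pow hsrc]
    simpa [Fin.prod_univ_two] using (hasSum_geometric_of_lt_one (hq₀ 1) (hq 1)).mul_left _

end KGraph

theorem statement4_general (Λ : KGraph 2) (hΛ : Λ.IsFinite)
    (u v : Λ.Obj) (huv : u ≠ v) (hall : ∀ x : Λ.Obj, x = u ∨ x = v)
    (d₁ d₂ a₁ a₂ : ℕ)
    (hcd₁ : {f : Λ.Hom u u | Λ.deg f = KGraph.gen 2 0}.ncard = d₁)
    (hcd₂ : {f : Λ.Hom u u | Λ.deg f = KGraph.gen 2 1}.ncard = d₂)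
    (hca₁ : {f : Λ.Hom u v | Λ.deg f = KGraph.gen 2 0}.ncard = a₁)
    (hca₂ : {f : Λ.Hom u v | Λ.deg f = KGraph.gen 2 1}.ncard = a₂)
    (hsrc : Λ.IsAbsoluteSource v)
    (r : Fin 2 → ℝ) (β : ℝ)
    (hβr₁ : Real.log d₁ < β * r 0) (hβr₂ : Real.log d₂ < β * r 1) :
    HasSum
      (fun μ : Λ.PathTo u =>
        Real.exp (-(β * (r 0 * (Λ.deg μ.2 0 : ℝ) + r 1 * (Λ.deg μ.2 1 : ℝ)))))
      ((1 - (d₁ : ℝ) * Real.exp (-(β * r 0)))⁻¹ *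
        (1 - (d₂ : ℝ) * Real.exp (-(β * r 1)))⁻¹) ∧
    HasSum
      (fun μ : Λ.PathTo v =>
        Real.exp (-(β * (r 0 * (Λ.deg μ.2 0 : ℝ) + r 1 * (Λ.deg μ.2 1 : ℝ)))))
      (1 + (a₁ : ℝ) * Real.exp (-(β * r 0)) *
          ((1 - (d₁ : ℝ) * Real.exp (-(β * r 0)))⁻¹ *
            (1 - (d₂ : ℝ) * Real.exp (-(β * r 1)))⁻¹) +
        (a₂ : ℝ) * Real.exp (-(β * r 1)) *
          (1 - (d₂ : ℝ) * Real.exp (-(β * r 1)))⁻¹) := by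
  have hD₁ : Λ.homCount u u (KGraph.gen 2 0) = d₁ := hcd₁
  have hD₂ : Λ.homCount u u (KGraph.gen 2 1) = d₂ := hcd₂
  have hA₁ : Λ.homCount u v (KGraph.gen 2 0) = a₁ := hca₁
  have hA₂ : Λ.homCount u v (KGraph.gen 2 1) = a₂ := hca₂
  set x : Fin 2 → ℝ := fun i => Real.exp (-(β * r i)) with hx
  have hq : ∀ i, (Λ.homCount u u (KGraph.gen 2 i) : ℝ) * x i < 1 := Fin.forall_fin_two.mpr
    ⟨hD₁ ▸ natCast_mul_exp_neg_lt_one hβr₁, hD₂ ▸ natCast_mul_exp_neg_lt_one hβr₂⟩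
  have hx₀ (i : Fin 2) : 0 ≤ x i := (Real.exp_pos _).le
  have hsrc_of_ne (w : Λ.Obj) (hw : w ≠ u) : Λ.IsAbsoluteSource w :=
    (hall w).resolve_left hw ▸ hsrc
  set W : (Fin 2 → ℕ) → ℝ := fun n => ∏ i, x i ^ n i with hW_def
  have hW : 0 ≤ W := fun n => Finset.prod_nonneg fun i _ => pow_nonneg (hx₀ i) (n i)
  have hyu := KGraph.hasSum_pathTo_of_hasSum_hom (W := W) huv hall hW
    (KGraph.hasSum_hom_self hΛ hx₀ hsrc_of_ne hq) (hsrc.hasSum_hom_of_ne huv.symm W)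
  have hyv := KGraph.hasSum_pathTo_of_hasSum_hom (W := W) huv hall hW
    (KGraph.hasSum_hom_of_ne hΛ hx₀ hsrc_of_ne huv hq) (hsrc.hasSum_hom_self W)
  simp only [exp_neg_mul_dotProduct_fin_two]
  constructor
  · convert hyu using 1
    simp [Fin.prod_univ_two, hD₁, hD₂, hx]
    ring
  · convert hyv using 1
    simp [hW_def, Fin.prod_univ_two, hD₁, hD₂, hA₁, hA₂, hx]
    ring

/-- For the 2-graph with two vertices `u, v` (with `v` an absolute source),
the series `y_u = ∑_{μ ∈ Λu} e^{-βr·d(μ)}` and `y_v = ∑_{μ ∈ Λv} e^{-βr·d(μ)}`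
converge, with the stated sums. -/
theorem statement4 (Λ : KGraph 2) (hΛ : Λ.IsFinite)
    (u v : Λ.Obj) (huv : u ≠ v) (hall : ∀ x : Λ.Obj, x = u ∨ x = v)
    (d₁ d₂ a₁ a₂ : ℕ)
    (hd₁ : 1 ≤ d₁) (hd₂ : 1 ≤ d₂) (ha₁ : 1 ≤ a₁) (ha₂ : 1 ≤ a₂)
    (hcd₁ : {f : Λ.Hom u u | Λ.deg f = KGraph.gen 2 0}.ncard = d₁)
    (hcd₂ : {f : Λ.Hom u u | Λ.deg f = KGraph.gen 2 1}.ncard = d₂)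
    (hca₁ : {f : Λ.Hom u v | Λ.deg f = KGraph.gen 2 0}.ncard = a₁)
    (hca₂ : {f : Λ.Hom u v | Λ.deg f = KGraph.gen 2 1}.ncard = a₂)
    (hsrc : Λ.IsAbsoluteSource v)
    (r : Fin 2 → ℝ) (hr : ∀ i, 0 < r i) (β : ℝ) (hβ : 0 < β)
    (hβr₁ : Real.log d₁ < β * r 0) (hβr₂ : Real.log d₂ < β * r 1) :
    HasSum
      (fun μ : Λ.PathTo u =>
        Real.exp (-(β * (r 0 * (Λ.deg μ.2 0 : ℝ) + r 1 * (Λ.deg μ.2 1 : ℝ)))))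
      ((1 - (d₁ : ℝ) * Real.exp (-(β * r 0)))⁻¹ *
        (1 - (d₂ : ℝ) * Real.exp (-(β * r 1)))⁻¹) ∧
    HasSum
      (fun μ : Λ.PathTo v =>
        Real.exp (-(β * (r 0 * (Λ.deg μ.2 0 : ℝ) + r 1 * (Λ.deg μ.2 1 : ℝ)))))
      (1 + (a₁ : ℝ) * Real.exp (-(β * r 0)) *
          ((1 - (d₁ : ℝ) * Real.exp (-(β * r 0)))⁻¹ *
            (1 - (d₂ : ℝ) * Real.exp (-(β * r 1)))⁻¹) +
        (a₂ : ℝ) * Real.exp (-(β * r 1)) *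
          (1 - (d₂ : ℝ) * Real.exp (-(β * r 1)))⁻¹) :=
  statement4_general Λ hΛ u v huv hall d₁ d₂ a₁ a₂ hcd₁ hcd₂ hca₁ hca₂ hsrc r β hβr₁ hβr₂
end

section
/- Let d_1, d_2, a_1, a_2, b_1, b_2, c_1, c_2, g_1, f_1, f_2 be positive real numbers satisfying d_1 a_2 = d_2 a_1, a_1 b_2 = d_2 b_1, a_2 g_1 = b_1 c_2, g_1 f_2 = b_2 c_1, c_1 f_2 = c_2 f_1, and f_2 > d_2. Define the 4×4 real matrices A_1 = [[d_1, a_1, b_1, 0],[0, 0, 0, g_1],[0, 0, 0, c_1],[0, 0, 0, f_1]] and A_2 = [[d_2, a_2, 0, 0],[0, 0, b_2, 0],[0, 0, 0, c_2],[0, 0, 0, f_2]], and the vector z := ((f_2 - d_2)^{-1} f_2^{-2} a_2 b_2 c_2, f_2^{-2} b_2 c_2, f_2^{-1} c_2, 1) ∈ ℝ⁴. Then A_1 z = f_1 z and A_2 z = f_2 z. -/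
/-! The rows of `A₂ z = f₂ z`, solved from the bottom up starting at `z₃ = 1`, are exactly the
recursion defining `z`, so the second equation holds by construction. The first one is where the
factorization relations enter: row by row, `A₁ z = f₁ z` clears to a polynomial identity in
the ideal they generate. -/

theorem statement12_general (d₁ d₂ a₁ a₂ b₁ b₂ c₁ c₂ g₁ f₁ f₂ : ℝ)
    (hf₂ : 0 < f₂)
    (hrel₁ : d₁ * a₂ = d₂ * a₁) (hrel₂ : a₁ * b₂ = d₂ * b₁)
    (hrel₃ : a₂ * g₁ = b₁ * c₂) (hrel₄ : g₁ * f₂ = b₂ * c₁)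
    (hrel₅ : c₁ * f₂ = c₂ * f₁) (hfd : d₂ < f₂) :
    let A₁ : Matrix (Fin 4) (Fin 4) ℝ :=
      !![d₁, a₁, b₁, 0; 0, 0, 0, g₁; 0, 0, 0, c₁; 0, 0, 0, f₁]
    let A₂ : Matrix (Fin 4) (Fin 4) ℝ :=
      !![d₂, a₂, 0, 0; 0, 0, b₂, 0; 0, 0, 0, c₂; 0, 0, 0, f₂]
    let z : Fin 4 → ℝ :=
      ![(f₂ - d₂)⁻¹ * (f₂ ^ 2)⁻¹ * (a₂ * b₂ * c₂), (f₂ ^ 2)⁻¹ * (b₂ * c₂),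
        f₂⁻¹ * c₂, 1]
    A₁.mulVec z = f₁ • z ∧ A₂.mulVec z = f₂ • z := by
  intro A₁ A₂ z
  have hf₂ : f₂ ≠ 0 := hf₂.ne'
  have hfd : f₂ - d₂ ≠ 0 := sub_ne_zero.mpr hfd.ne'
  refine ⟨?_, ?_⟩ <;> ext i <;> fin_cases i <;>
    simp only [A₁, A₂, z, Matrix.mulVec, dotProduct, Fin.sum_univ_four, Fin.zero_eta, Fin.mk_one,
      Fin.reduceFinMk, Matrix.of_apply, Matrix.cons_val, Pi.smul_apply, smul_eq_mul,
      zero_mul, add_zero, zero_add] <;> field_simp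
  · linear_combination c₂ * b₂ * hrel₁ + c₂ * f₂ * hrel₂ - f₂ ^ 2 * hrel₃
      + a₂ * f₂ * hrel₄ + a₂ * b₂ * hrel₅
  · linear_combination f₂ * hrel₄ + b₂ * hrel₅
  · linear_combination hrel₅
  · ring

/-- The vector `z = ((f₂-d₂)⁻¹f₂⁻²a₂b₂c₂, f₂⁻²b₂c₂, f₂⁻¹c₂, 1)` is a common
eigenvector of the vertex matrices `A₁` and `A₂`, with eigenvalues `f₁` and `f₂`. -/
theorem statement12 (d₁ d₂ a₁ a₂ b₁ b₂ c₁ c₂ g₁ f₁ f₂ : ℝ)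
    (hd₁ : 0 < d₁) (hd₂ : 0 < d₂) (ha₁ : 0 < a₁) (ha₂ : 0 < a₂)
    (hb₁ : 0 < b₁) (hb₂ : 0 < b₂) (hc₁ : 0 < c₁) (hc₂ : 0 < c₂)
    (hg₁ : 0 < g₁) (hf₁ : 0 < f₁) (hf₂ : 0 < f₂)
    (hrel₁ : d₁ * a₂ = d₂ * a₁) (hrel₂ : a₁ * b₂ = d₂ * b₁)
    (hrel₃ : a₂ * g₁ = b₁ * c₂) (hrel₄ : g₁ * f₂ = b₂ * c₁)
    (hrel₅ : c₁ * f₂ = c₂ * f₁) (hfd : d₂ < f₂) :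
    let A₁ : Matrix (Fin 4) (Fin 4) ℝ :=
      !![d₁, a₁, b₁, 0; 0, 0, 0, g₁; 0, 0, 0, c₁; 0, 0, 0, f₁]
    let A₂ : Matrix (Fin 4) (Fin 4) ℝ :=
      !![d₂, a₂, 0, 0; 0, 0, b₂, 0; 0, 0, 0, c₂; 0, 0, 0, f₂]
    let z : Fin 4 → ℝ :=
      ![(f₂ - d₂)⁻¹ * (f₂ ^ 2)⁻¹ * (a₂ * b₂ * c₂), (f₂ ^ 2)⁻¹ * (b₂ * c₂),
        f₂⁻¹ * c₂, 1]
    A₁.mulVec z = f₁ • z ∧ A₂.mulVec z = f₂ • z :=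
  statement12_general d₁ d₂ a₁ a₂ b₁ b₂ c₁ c₂ g₁ f₁ f₂ hf₂ hrel₁ hrel₂ hrel₃ hrel₄ hrel₅ hfd
end

section
/- Let Λ be a finite k-graph, u a vertex, and E ⊆ uΛ^1 a finite exhaustive set. Let {t_λ : λ ∈ Λ} be a Toeplitz–Cuntz–Krieger Λ-family in a complex *-algebra. For ∅ ≠ J ⊆ {1,…,k} write e_J = ∑_{i∈J} e_i. Then the factors t_u − t_e t_e* for e ∈ E pairwise commute, and ∏_{e∈E}(t_u − t_e t_e*) = t_u + ∑_{∅≠J⊆{1,…,k}} (−1)^{|J|} ∑_{μ} t_μ t_μ*, where the inner sum is over all μ ∈ uΛ^{e_J} such that the initial segment μ(0, e_i) lies in E for every i ∈ J. -/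
open scoped Classical in
/-- A Toeplitz–Cuntz–Krieger `Λ`-family in a `*`-algebra `A`: the vertex
elements are mutually orthogonal self-adjoint idempotents, `t_μ t_ν = t_{μν}`,
`t_μ* t_μ = t_{s(μ)}`, and `t_μ* t_ν = ∑_{(α,β) ∈ Λ^min(μ,ν)} t_α t_β*`. -/
def IsTCKFamily {k : ℕ} (Λ : KGraph k) {A : Type} [Ring A] [StarRing A]
    (t : ∀ u v : Λ.Obj, Λ.Hom u v → A) : Prop :=
  (∀ v : Λ.Obj, star (t v v (Λ.id v)) = t v v (Λ.id v)) ∧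
  (∀ v w : Λ.Obj,
    t v v (Λ.id v) * t w w (Λ.id w) = if v = w then t v v (Λ.id v) else 0) ∧
  (∀ (u v w : Λ.Obj) (μ : Λ.Hom u v) (ν : Λ.Hom v w),
    t u v μ * t v w ν = t u w (Λ.comp μ ν)) ∧
  (∀ (u v : Λ.Obj) (μ : Λ.Hom u v), star (t u v μ) * t u v μ = t v v (Λ.id v)) ∧
  (∀ (u a b : Λ.Obj) (μ : Λ.Hom u a) (ν : Λ.Hom u b),
    star (t u a μ) * t u b ν =
      ∑ᶠ p ∈ Λ.MCE μ ν, t a p.1 p.2.1 * star (t b p.1 p.2.2))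

namespace KGraph

variable {k : ℕ} {Λ : KGraph k}

theorem gen_injective : Function.Injective (gen k) := fun i j h => by
  by_contra hij
  simpa [gen, Pi.single_apply, hij] using congrFun h i

theorem sum_gen_apply (J : Finset (Fin k)) (j : Fin k) :
    (∑ i ∈ J, gen k i) j = if j ∈ J then 1 else 0 := by
  simp [gen, Finset.sum_apply, Pi.single_apply]

theorem factor_unique {u v a b : Λ.Obj} {α : Λ.Hom u a} {β : Λ.Hom a v}
    {α' : Λ.Hom u b} {β' : Λ.Hom b v} (hα : Λ.deg α = Λ.deg α')
    (h : Λ.comp α β = Λ.comp α' β') :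
    (⟨a, α, β⟩ : Σ w, Λ.Hom u w × Λ.Hom w v) = ⟨b, α', β'⟩ := by
  have hβ : Λ.deg β = Λ.deg β' := by
    have := congrArg Λ.deg h
    rw [Λ.deg_comp, Λ.deg_comp, hα] at this
    exact add_left_cancel this
  exact (Λ.factor _ _ _ (Λ.deg_comp α β)).unique ⟨rfl, rfl, rfl⟩ ⟨hα.symm, hβ.symm, h.symm⟩

theorem comp_left_cancel {u v w : Λ.Obj} (μ : Λ.Hom u v) {α α' : Λ.Hom v w}
    (h : Λ.comp μ α = Λ.comp μ α') : α = α' := by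
  simpa using factor_unique rfl h

theorem finite_setOf_deg_eq (hΛ : Λ.IsFinite) (u : Λ.Obj) (n : Fin k → ℕ) :
    {μ : Λ.PathFrom u | Λ.deg μ.2 = n}.Finite :=
  (hΛ n).preimage sigma_mk_injective.injOn

def IsPrefix {u : Λ.Obj} (μ ν : Λ.PathFrom u) : Prop :=
  ∃ β : Λ.Hom μ.1 ν.1, Λ.comp μ.2 β = ν.2

namespace IsPrefix

variable {u : Λ.Obj} {μ ν ρ : Λ.PathFrom u}

theorem refl (μ : Λ.PathFrom u) : IsPrefix μ μ := ⟨Λ.id μ.1, Λ.comp_id μ.2⟩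

theorem trans (hμν : IsPrefix μ ν) (hνρ : IsPrefix ν ρ) : IsPrefix μ ρ := by
  obtain ⟨α, hα⟩ := hμν
  obtain ⟨β, hβ⟩ := hνρ
  exact ⟨Λ.comp α β, by rw [← Λ.assoc, hα, hβ]⟩

theorem deg_le (h : IsPrefix μ ν) : Λ.deg μ.2 ≤ Λ.deg ν.2 := by
  obtain ⟨β, hβ⟩ := h
  rw [← hβ, Λ.deg_comp]
  exact fun i => Nat.le_add_right _ _

theorem eq_of_deg_eq (hμ : IsPrefix μ ρ) (hν : IsPrefix ν ρ) (h : Λ.deg μ.2 = Λ.deg ν.2) :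
    μ = ν := by
  obtain ⟨α, hα⟩ := hμ
  obtain ⟨β, hβ⟩ := hν
  exact congrArg (fun p : Σ w, Λ.Hom u w × Λ.Hom w ρ.1 => (⟨p.1, p.2.1⟩ : Λ.PathFrom u))
    (factor_unique h (hα.trans hβ.symm))

theorem exists_deg_eq (ρ : Λ.PathFrom u) {m : Fin k → ℕ} (hm : m ≤ Λ.deg ρ.2) :
    ∃ μ : Λ.PathFrom u, Λ.deg μ.2 = m ∧ IsPrefix μ ρ := by
  obtain ⟨⟨w, μ, β⟩, ⟨hμ, -, hμβ⟩, -⟩ :=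
    Λ.factor ρ.2 m (Λ.deg ρ.2 - m) (add_tsub_cancel_of_le hm).symm
  exact ⟨⟨w, μ⟩, hμ, β, hμβ⟩

theorem of_deg_le (hμ : IsPrefix μ ρ) (hν : IsPrefix ν ρ) (h : Λ.deg μ.2 ≤ Λ.deg ν.2) :
    IsPrefix μ ν := by
  obtain ⟨μ', hdeg, hμ'⟩ := exists_deg_eq ν h
  rwa [eq_of_deg_eq hμ (hμ'.trans hν) hdeg.symm]

end IsPrefix

theorem eq_id_of_deg_eq_zero_s17 {u : Λ.Obj} {μ : Λ.PathFrom u} (h : Λ.deg μ.2 = 0) :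
    μ = ⟨u, Λ.id u⟩ :=
  IsPrefix.eq_of_deg_eq (.refl μ) ⟨μ.2, Λ.id_comp μ.2⟩ (h.trans (Λ.deg_id u).symm)

open scoped Classical

/-- `minExt {μ, ν}` is the set of common extensions `μα = νβ` for `(α, β) ∈ Λ^min(μ, ν)`. -/
def minExt {u : Λ.Obj} (F : Finset (Λ.PathFrom u)) : Set (Λ.PathFrom u) :=
  {ρ | Λ.deg ρ.2 = F.sup (fun e => Λ.deg e.2) ∧ ∀ e ∈ F, IsPrefix e ρ}

section minExt

variable {u : Λ.Obj}

theorem minExt_finite (hΛ : Λ.IsFinite) (F : Finset (Λ.PathFrom u)) : (minExt F).Finite :=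
  (finite_setOf_deg_eq hΛ u _).subset fun _ hρ => hρ.1

theorem minExt_empty : minExt (∅ : Finset (Λ.PathFrom u)) = {⟨u, Λ.id u⟩} := by
  ext ρ
  simp only [minExt, Finset.sup_empty, Finset.notMem_empty, IsEmpty.forall_iff, implies_true,
    and_true, Set.mem_ofPred_eq, Set.mem_singleton_iff]
  exact ⟨eq_id_of_deg_eq_zero_s17, fun h => h ▸ Λ.deg_id u⟩

theorem minExt_insert (e : Λ.PathFrom u) (F : Finset (Λ.PathFrom u)) :
    minExt (insert e F) = ⋃ ρ ∈ minExt F, minExt {ρ, e} := by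
  ext ρ'
  simp only [minExt, Set.mem_iUnion, Set.mem_ofPred_eq, Finset.sup_insert, Finset.sup_singleton,
    Finset.forall_mem_insert, Finset.mem_singleton, forall_eq, exists_prop]
  constructor
  · rintro ⟨hdeg, he, hF⟩
    obtain ⟨ρ, hρ, hρρ'⟩ := IsPrefix.exists_deg_eq ρ' (hdeg ▸ le_sup_right)
    refine ⟨ρ, ⟨hρ, fun f hf => (hF f hf).of_deg_le hρρ' ?_⟩, ?_, hρρ', he⟩
    · exact hρ ▸ Finset.le_sup (f := fun e => Λ.deg e.2) hf
    · rw [hdeg, hρ, sup_comm]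
  · rintro ⟨ρ, ⟨hρ, hF⟩, hdeg, hρρ', he⟩
    exact ⟨by rw [hdeg, hρ, sup_comm], he, fun f hf => (hF f hf).trans hρρ'⟩

theorem pairwiseDisjoint_minExt_pair (F : Finset (Λ.PathFrom u)) (e : Λ.PathFrom u) :
    (minExt F).PairwiseDisjoint fun ρ => minExt {ρ, e} := by
  intro ρ₁ h₁ ρ₂ h₂ hne
  refine Set.disjoint_left.2 fun ρ hρ₁ hρ₂ => hne ?_
  simp only [minExt, Finset.forall_mem_insert, Set.mem_ofPred_eq] at hρ₁ hρ₂
  exact hρ₁.2.1.eq_of_deg_eq hρ₂.2.1 (h₁.1.trans h₂.1.symm)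

theorem bijOn_MCE (μ ν : Λ.PathFrom u) :
    Set.BijOn (fun p => (⟨p.1, Λ.comp μ.2 p.2.1⟩ : Λ.PathFrom u)) (Λ.MCE μ.2 ν.2)
      (minExt {μ, ν}) := by
  refine ⟨fun p hp => ?_, ?_, fun ρ hρ => ?_⟩
  · refine ⟨by simpa using hp.2, ?_⟩
    simp only [Finset.forall_mem_insert, Finset.mem_singleton, forall_eq]
    exact ⟨⟨p.2.1, rfl⟩, ⟨p.2.2, hp.1.symm⟩⟩
  · rintro ⟨x, α, β⟩ hp ⟨y, α', β'⟩ hq h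
    obtain ⟨rfl, h⟩ := Sigma.mk.inj_iff.1 h
    obtain rfl := comp_left_cancel _ (eq_of_heq h)
    obtain rfl := comp_left_cancel ν.2 (hp.1.symm.trans hq.1)
    rfl
  · simp only [minExt, Finset.forall_mem_insert, Finset.mem_singleton, forall_eq,
      Set.mem_ofPred_eq] at hρ
    obtain ⟨hdeg, ⟨α, hα⟩, ⟨β, hβ⟩⟩ := hρ
    refine ⟨⟨ρ.1, α, β⟩, ⟨hα.trans hβ.symm, ?_⟩, by simp [hα]⟩
    simp [hα, hdeg]

theorem MCE_finite (hΛ : Λ.IsFinite) (μ ν : Λ.PathFrom u) : (Λ.MCE μ.2 ν.2).Finite :=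
  Set.Finite.of_finite_image ((bijOn_MCE μ ν).image_eq ▸ minExt_finite hΛ _) (bijOn_MCE μ ν).injOn

end minExt

def cubes {u : Λ.Obj} (E : Finset (Λ.PathFrom u)) (J : Finset (Fin k)) :
    Set (Λ.PathFrom u) :=
  {μ : Λ.PathFrom u |
    Λ.deg μ.2 = ∑ i ∈ J, gen k i ∧
    ∀ i ∈ J, ∃ (x : Λ.Obj) (α : Λ.Hom u x) (β : Λ.Hom x μ.1),
      Λ.deg α = gen k i ∧ Λ.comp α β = μ.2 ∧ (⟨x, α⟩ : Λ.PathFrom u) ∈ E}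

def degSupport {u : Λ.Obj} (ρ : Λ.PathFrom u) : Finset (Fin k) :=
  Finset.univ.filter fun i => Λ.deg ρ.2 i ≠ 0

section cubes

variable {u : Λ.Obj} {E F : Finset (Λ.PathFrom u)} {J : Finset (Fin k)} {e ρ : Λ.PathFrom u}
  {i : Fin k}

theorem mem_cubes : ρ ∈ cubes E J ↔ Λ.deg ρ.2 = ∑ i ∈ J, gen k i ∧
    ∀ i ∈ J, ∃ e ∈ E, Λ.deg e.2 = gen k i ∧ IsPrefix e ρ := by
  refine and_congr_right' (forall₂_congr fun i _ => ⟨?_, ?_⟩)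
  · rintro ⟨x, α, β, hα, hαβ, hE⟩
    exact ⟨⟨x, α⟩, hE, hα, β, hαβ⟩
  · rintro ⟨⟨x, α⟩, hE, hα, β, hαβ⟩
    exact ⟨x, α, β, hα, hαβ, hE⟩

theorem cubes_finite (hΛ : Λ.IsFinite) (E : Finset (Λ.PathFrom u)) (J : Finset (Fin k)) :
    (cubes E J).Finite :=
  (finite_setOf_deg_eq hΛ u _).subset fun _ hρ => hρ.1

theorem cubes_empty (E : Finset (Λ.PathFrom u)) : cubes E ∅ = {⟨u, Λ.id u⟩} := by
  ext ρ
  simp only [mem_cubes, Finset.sum_empty, Finset.notMem_empty, IsEmpty.forall_iff, implies_true,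
    and_true, Set.mem_singleton_iff]
  exact ⟨eq_id_of_deg_eq_zero_s17, fun h => h ▸ Λ.deg_id u⟩

theorem degSupport_of_mem_cubes (hρ : ρ ∈ cubes E J) : degSupport ρ = J := by
  ext i
  rw [degSupport, Finset.mem_filter, hρ.1, sum_gen_apply]
  simp

theorem IsPrefix.mem_degSupport (h : IsPrefix e ρ) (hi : Λ.deg e.2 = gen k i) :
    i ∈ degSupport ρ := by
  have := h.deg_le i
  simp only [hi, gen, Pi.single_eq_same] at this
  simpa [degSupport] using Nat.one_le_iff_ne_zero.1 this

theorem eq_gen_of_mem_edges (he : e ∈ Λ.edges u) (hi : Λ.deg e.2 i ≠ 0) :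
    Λ.deg e.2 = gen k i := by
  obtain ⟨j, hj⟩ := he
  rw [hj] at hi ⊢
  obtain rfl : i = j := by simpa [gen, Pi.single_apply] using hi
  rfl

theorem exists_mem_deg_eq_gen (hF : ↑F ⊆ Λ.edges u) (hρ : ρ ∈ minExt F)
    (hi : i ∈ degSupport ρ) : ∃ e ∈ F, Λ.deg e.2 = gen k i := by
  have hi : (F.sup fun e => Λ.deg e.2 i) ≠ ⊥ := by
    simpa [degSupport, hρ.1, Finset.sup_apply] using hi
  obtain ⟨e, he, hei⟩ : ∃ e ∈ F, Λ.deg e.2 i ≠ 0 := by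
    by_contra! h
    exact hi ((Finset.sup_eq_bot_iff _ _).2 h)
  exact ⟨e, he, eq_gen_of_mem_edges (hF he) hei⟩

theorem deg_eq_sum_gen_degSupport (hF : ↑F ⊆ Λ.edges u) (hρ : ρ ∈ minExt F) :
    Λ.deg ρ.2 = ∑ i ∈ degSupport ρ, gen k i := by
  funext i
  have hle : Λ.deg ρ.2 i ≤ 1 := by
    rw [hρ.1, Finset.sup_apply]
    refine Finset.sup_le fun f hf => ?_
    obtain ⟨j, hj⟩ := hF hf
    rw [hj, gen, Pi.single_apply]
    split <;> omega
  rw [sum_gen_apply]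
  split_ifs with hi <;> simp only [degSupport, Finset.mem_filter, Finset.mem_univ, true_and] at hi
    <;> omega

theorem card_eq_card_degSupport (hF : ↑F ⊆ Λ.edges u) (hρ : ρ ∈ minExt F) :
    F.card = (degSupport ρ).card := by
  have himage : F.image (fun e => Λ.deg e.2) = (degSupport ρ).image (gen k) := by
    ext m
    simp only [Finset.mem_image]
    constructor
    · rintro ⟨e, he, rfl⟩
      obtain ⟨i, hi⟩ := hF he
      exact ⟨i, (hρ.2 e he).mem_degSupport hi, hi.symm⟩
    · rintro ⟨i, hi, rfl⟩
      exact exists_mem_deg_eq_gen hF hρ hi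
  rw [← Finset.card_image_of_injOn fun e he f hf h => (hρ.2 e he).eq_of_deg_eq (hρ.2 f hf) h,
    himage, Finset.card_image_of_injective _ gen_injective]

theorem mem_cubes_degSupport (hE : ↑E ⊆ Λ.edges u) (hFE : F ⊆ E) (hρ : ρ ∈ minExt F) :
    ρ ∈ cubes E (degSupport ρ) := by
  have hF : ↑F ⊆ Λ.edges u := (Finset.coe_subset.2 hFE).trans hE
  refine mem_cubes.2 ⟨deg_eq_sum_gen_degSupport hF hρ, fun i hi => ?_⟩
  obtain ⟨e, he, hei⟩ := exists_mem_deg_eq_gen hF hρ hi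
  exact ⟨e, hFE he, hei, hρ.2 e he⟩

theorem filter_isPrefix_eq (hE : ↑E ⊆ Λ.edges u) (hFE : F ⊆ E) (hρ : ρ ∈ minExt F) :
    E.filter (IsPrefix · ρ) = F := by
  ext e
  refine ⟨fun he => ?_, fun he => Finset.mem_filter.2 ⟨hFE he, hρ.2 e he⟩⟩
  obtain ⟨heE, heρ⟩ := Finset.mem_filter.1 he
  obtain ⟨i, hi⟩ := hE heE
  obtain ⟨f, hf, hfi⟩ :=
    exists_mem_deg_eq_gen ((Finset.coe_subset.2 hFE).trans hE) hρ (heρ.mem_degSupport hi)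
  rwa [heρ.eq_of_deg_eq (hρ.2 f hf) (hi.trans hfi.symm)]

theorem mem_minExt_filter_isPrefix (hρ : ρ ∈ cubes E J) :
    ρ ∈ minExt (E.filter (IsPrefix · ρ)) := by
  obtain ⟨hdeg, hJ⟩ := mem_cubes.1 hρ
  refine ⟨le_antisymm (fun i => ?_) (Finset.sup_le fun e he => (Finset.mem_filter.1 he).2.deg_le),
    fun e he => (Finset.mem_filter.1 he).2⟩
  rw [hdeg, sum_gen_apply]
  split_ifs with hi
  · obtain ⟨e, he, hei, heρ⟩ := hJ i hi
    calc 1 = Λ.deg e.2 i := by simp [hei, gen]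
      _ ≤ _ := Finset.le_sup (f := fun e => Λ.deg e.2) (Finset.mem_filter.2 ⟨he, heρ⟩) i
  · exact Nat.zero_le _

theorem sum_powerset_minExt_eq_sum_cubes {M : Type*} [AddCommMonoid M] (hΛ : Λ.IsFinite)
    (hE : ↑E ⊆ Λ.edges u) (f : ℕ → Λ.PathFrom u → M) :
    ∑ F ∈ E.powerset, ∑ᶠ ρ ∈ minExt F, f F.card ρ =
      ∑ J : Finset (Fin k), ∑ᶠ ρ ∈ cubes E J, f J.card ρ := by
  simp_rw [finsum_mem_eq_finite_toFinset_sum _ (minExt_finite hΛ _),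
    finsum_mem_eq_finite_toFinset_sum _ (cubes_finite hΛ E _)]
  rw [Finset.sum_sigma', Finset.sum_sigma']
  refine Finset.sum_nbij' (fun x => ⟨degSupport x.2, x.2⟩)
    (fun x => ⟨E.filter (IsPrefix · x.2), x.2⟩) ?_ ?_ ?_ ?_ ?_ <;>
    simp only [Finset.mem_sigma, Finset.mem_powerset, Finset.mem_univ, true_and,
      Set.Finite.mem_toFinset]
  · exact fun ⟨F, ρ⟩ ⟨hFE, hρ⟩ => mem_cubes_degSupport hE hFE hρ
  · exact fun ⟨J, ρ⟩ hρ => ⟨Finset.filter_subset _ _, mem_minExt_filter_isPrefix hρ⟩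
  · exact fun ⟨F, ρ⟩ ⟨hFE, hρ⟩ => by rw [filter_isPrefix_eq hE hFE hρ]
  · exact fun ⟨J, ρ⟩ hρ => by rw [degSupport_of_mem_cubes hρ]
  · exact fun ⟨F, ρ⟩ ⟨hFE, hρ⟩ => by
      rw [card_eq_card_degSupport ((Finset.coe_subset.2 hFE).trans hE) hρ]

end cubes

def rangeProj {A : Type} [Ring A] [StarRing A] (t : ∀ u v : Λ.Obj, Λ.Hom u v → A) {u : Λ.Obj}
    (μ : Λ.PathFrom u) : A :=
  t u μ.1 μ.2 * star (t u μ.1 μ.2)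

/-- For a TCK family this is `t_u ∏_{e ∈ F} t_e t_e*`, by `IsTCKFamily.minExtProj_mul_rangeProj`. -/
noncomputable def minExtProj {A : Type} [Ring A] [StarRing A]
    (t : ∀ u v : Λ.Obj, Λ.Hom u v → A) {u : Λ.Obj} (F : Finset (Λ.PathFrom u)) : A :=
  ∑ᶠ ρ ∈ minExt F, rangeProj t ρ

end KGraph

namespace IsTCKFamily

open KGraph
open scoped Classical

variable {k : ℕ} {Λ : KGraph k} {A : Type} [Ring A] [StarRing A]
  {t : ∀ u v : Λ.Obj, Λ.Hom u v → A} {u : Λ.Obj}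

theorem vertex_mul (ht : IsTCKFamily Λ t) {v : Λ.Obj} (μ : Λ.Hom u v) :
    t u u (Λ.id u) * t u v μ = t u v μ := by
  rw [ht.2.2.1, Λ.id_comp]

theorem vertex_mul_rangeProj (ht : IsTCKFamily Λ t) (μ : Λ.PathFrom u) :
    t u u (Λ.id u) * rangeProj t μ = rangeProj t μ := by
  rw [rangeProj, ← mul_assoc, ht.vertex_mul]

theorem rangeProj_mul_vertex (ht : IsTCKFamily Λ t) (μ : Λ.PathFrom u) :
    rangeProj t μ * t u u (Λ.id u) = rangeProj t μ :=
  calc rangeProj t μ * t u u (Λ.id u) = star (t u u (Λ.id u) * rangeProj t μ) := by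
        rw [star_mul, ht.1 u, rangeProj, star_mul, star_star]
    _ = rangeProj t μ := by rw [ht.vertex_mul_rangeProj, rangeProj, star_mul, star_star]

theorem rangeProj_mul_rangeProj (ht : IsTCKFamily Λ t) (hΛ : Λ.IsFinite)
    (μ ν : Λ.PathFrom u) :
    rangeProj t μ * rangeProj t ν = ∑ᶠ ρ ∈ minExt {μ, ν}, rangeProj t ρ :=
  calc rangeProj t μ * rangeProj t ν
      = t u μ.1 μ.2 * (star (t u μ.1 μ.2) * t u ν.1 ν.2) * star (t u ν.1 ν.2) := by
        simp only [rangeProj, mul_assoc]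
    _ = ∑ᶠ p ∈ Λ.MCE μ.2 ν.2,
          t u μ.1 μ.2 * (t μ.1 p.1 p.2.1 * star (t ν.1 p.1 p.2.2)) * star (t u ν.1 ν.2) := by
        rw [ht.2.2.2.2, mul_finsum_mem' _ _ (MCE_finite hΛ μ ν),
          finsum_mem_mul' _ _ (MCE_finite hΛ μ ν)]
    _ = ∑ᶠ p ∈ Λ.MCE μ.2 ν.2, rangeProj t ⟨p.1, Λ.comp μ.2 p.2.1⟩ := by
        refine finsum_mem_congr rfl fun p hp => ?_
        have hstar : star (t u p.1 (Λ.comp μ.2 p.2.1)) =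
            star (t ν.1 p.1 p.2.2) * star (t u ν.1 ν.2) := by
          rw [hp.1, ← ht.2.2.1, star_mul]
        show _ = t u p.1 (Λ.comp μ.2 p.2.1) * star (t u p.1 (Λ.comp μ.2 p.2.1))
        rw [hstar, ← ht.2.2.1]
        simp only [mul_assoc]
    _ = ∑ᶠ ρ ∈ minExt {μ, ν}, rangeProj t ρ :=
        finsum_mem_eq_of_bijOn _ (bijOn_MCE μ ν) fun _ _ => rfl

theorem commute_rangeProj (ht : IsTCKFamily Λ t) (hΛ : Λ.IsFinite)
    (μ ν : Λ.PathFrom u) : Commute (rangeProj t μ) (rangeProj t ν) := by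
  rw [Commute, SemiconjBy, ht.rangeProj_mul_rangeProj hΛ, ht.rangeProj_mul_rangeProj hΛ,
    Finset.pair_comm]

theorem commute_vertex_sub_rangeProj (ht : IsTCKFamily Λ t) (hΛ : Λ.IsFinite)
    (μ ν : Λ.PathFrom u) :
    Commute (t u u (Λ.id u) - rangeProj t μ) (t u u (Λ.id u) - rangeProj t ν) := by
  have hvertex (μ : Λ.PathFrom u) : Commute (t u u (Λ.id u)) (rangeProj t μ) :=
    (ht.vertex_mul_rangeProj μ).trans (ht.rangeProj_mul_vertex μ).symm
  exact ((Commute.refl _).sub_right (hvertex ν)).sub_left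
    ((hvertex μ).symm.sub_right (ht.commute_rangeProj hΛ μ ν))

theorem rangeProj_id (ht : IsTCKFamily Λ t) :
    rangeProj t ⟨u, Λ.id u⟩ = t u u (Λ.id u) := by
  rw [rangeProj, ht.1 u, ht.vertex_mul]

theorem minExtProj_empty (ht : IsTCKFamily Λ t) :
    minExtProj t (∅ : Finset (Λ.PathFrom u)) = t u u (Λ.id u) := by
  rw [minExtProj, minExt_empty, finsum_mem_singleton, ht.rangeProj_id]

theorem minExtProj_mul_vertex (ht : IsTCKFamily Λ t) (hΛ : Λ.IsFinite)
    (F : Finset (Λ.PathFrom u)) : minExtProj t F * t u u (Λ.id u) = minExtProj t F := by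
  rw [minExtProj, finsum_mem_mul' _ _ (minExt_finite hΛ F)]
  exact finsum_mem_congr rfl fun ρ _ => ht.rangeProj_mul_vertex ρ

theorem minExtProj_mul_rangeProj (ht : IsTCKFamily Λ t) (hΛ : Λ.IsFinite)
    (F : Finset (Λ.PathFrom u)) (e : Λ.PathFrom u) :
    minExtProj t F * rangeProj t e = minExtProj t (insert e F) :=
  calc minExtProj t F * rangeProj t e
      = ∑ᶠ ρ ∈ minExt F, ∑ᶠ ρ' ∈ minExt {ρ, e}, rangeProj t ρ' := by
        rw [minExtProj, finsum_mem_mul' _ _ (minExt_finite hΛ F)]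
        exact finsum_mem_congr rfl fun ρ _ => ht.rangeProj_mul_rangeProj hΛ ρ e
    _ = minExtProj t (insert e F) := by
        rw [minExtProj, minExt_insert, finsum_mem_biUnion (pairwiseDisjoint_minExt_pair F e)
          (minExt_finite hΛ F) fun ρ _ => minExt_finite hΛ _]

theorem vertex_mul_noncommProd (ht : IsTCKFamily Λ t) (hΛ : Λ.IsFinite)
    (F : Finset (Λ.PathFrom u))
    (comm : (↑F : Set (Λ.PathFrom u)).Pairwise fun e f =>
      Commute (t u u (Λ.id u) - rangeProj t e) (t u u (Λ.id u) - rangeProj t f)) :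
    t u u (Λ.id u) * F.noncommProd (fun e => t u u (Λ.id u) - rangeProj t e) comm =
      ∑ F' ∈ F.powerset, (-1 : A) ^ F'.card * minExtProj t F' := by
  induction F using Finset.induction_on with
  | empty => simp [ht.minExtProj_empty]
  | @insert a F ha ih =>
    have hsign (F' : Finset (Λ.PathFrom u)) (hF' : F' ∈ F.powerset) :
        (-1 : A) ^ F'.card * minExtProj t F' * rangeProj t a =
          -((-1 : A) ^ (insert a F').card * minExtProj t (insert a F')) := by
      rw [Finset.card_insert_of_notMem fun h => ha (Finset.mem_powerset.1 hF' h), pow_succ,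
        mul_assoc, ht.minExtProj_mul_rangeProj hΛ]
      noncomm_ring
    rw [Finset.noncommProd_insert_of_notMem' F a _ _ ha, ← mul_assoc,
      ih (comm.mono (Finset.coe_subset.2 (Finset.subset_insert a F))),
      Finset.sum_powerset_insert ha, mul_sub, Finset.sum_mul, Finset.sum_mul,
      Finset.sum_congr rfl hsign, Finset.sum_neg_distrib, sub_neg_eq_add]
    simp only [mul_assoc, ht.minExtProj_mul_vertex hΛ]

theorem vertex_mul_noncommProd_of_nonempty (ht : IsTCKFamily Λ t)
    {F : Finset (Λ.PathFrom u)} (hF : F.Nonempty)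
    (comm : (↑F : Set (Λ.PathFrom u)).Pairwise fun e f =>
      Commute (t u u (Λ.id u) - rangeProj t e) (t u u (Λ.id u) - rangeProj t f)) :
    t u u (Λ.id u) * F.noncommProd (fun e => t u u (Λ.id u) - rangeProj t e) comm =
      F.noncommProd (fun e => t u u (Λ.id u) - rangeProj t e) comm := by
  induction F using Finset.induction_on with
  | empty => exact absurd hF Finset.not_nonempty_empty
  | @insert a F ha _ =>
    rw [Finset.noncommProd_insert_of_notMem F a _ _ ha, ← mul_assoc, mul_sub,
      ht.vertex_mul, ht.vertex_mul_rangeProj]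

theorem sum_powerset_minExtProj_eq (ht : IsTCKFamily Λ t) (hΛ : Λ.IsFinite)
    {E : Finset (Λ.PathFrom u)} (hE : ↑E ⊆ Λ.edges u) :
    ∑ F ∈ E.powerset, (-1 : A) ^ F.card * minExtProj t F =
      t u u (Λ.id u) +
        ∑ J ∈ Finset.univ.filter fun J : Finset (Fin k) => J.Nonempty,
          (-1 : A) ^ J.card * ∑ᶠ μ ∈ cubes E J, rangeProj t μ := by
  have hsum := sum_powerset_minExt_eq_sum_cubes hΛ hE fun n ρ => (-1 : A) ^ n * rangeProj t ρ
  simp_rw [← mul_finsum_mem' _ _ (minExt_finite hΛ _), ← mul_finsum_mem' _ _ (cubes_finite hΛ E _)]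
    at hsum
  rw [← Finset.sum_filter_not_add_sum_filter _ fun J : Finset (Fin k) => J.Nonempty] at hsum
  simp only [Finset.not_nonempty_iff_eq_empty, Finset.filter_eq', Finset.mem_univ, if_true,
    Finset.sum_singleton, Finset.card_empty, pow_zero, one_mul, cubes_empty,
    finsum_mem_singleton, ht.rangeProj_id] at hsum
  exact hsum

end IsTCKFamily

theorem statement17_general {k : ℕ} (Λ : KGraph k) (hΛ : Λ.IsFinite)
    (u : Λ.Obj) (E : Finset (Λ.PathFrom u))
    (hE : Λ.IsExhaustive u (↑E : Set (Λ.PathFrom u)))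
    {A : Type} [Ring A] [StarRing A]
    (t : ∀ u v : Λ.Obj, Λ.Hom u v → A) (ht : IsTCKFamily Λ t) :
    ∃ comm : (↑E : Set (Λ.PathFrom u)).Pairwise fun e f =>
        Commute (t u u (Λ.id u) - t u e.1 e.2 * star (t u e.1 e.2))
          (t u u (Λ.id u) - t u f.1 f.2 * star (t u f.1 f.2)),
      E.noncommProd
          (fun e => t u u (Λ.id u) - t u e.1 e.2 * star (t u e.1 e.2)) comm =
        t u u (Λ.id u) +
          ∑ J ∈ Finset.univ.filter fun J : Finset (Fin k) => J.Nonempty,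
            (-1 : A) ^ J.card *
              ∑ᶠ μ ∈ {μ : Λ.PathFrom u |
                  Λ.deg μ.2 = ∑ i ∈ J, KGraph.gen k i ∧
                  ∀ i ∈ J, ∃ (x : Λ.Obj) (α : Λ.Hom u x) (β : Λ.Hom x μ.1),
                    Λ.deg α = KGraph.gen k i ∧ Λ.comp α β = μ.2 ∧
                      (⟨x, α⟩ : Λ.PathFrom u) ∈ E},
                t u μ.1 μ.2 * star (t u μ.1 μ.2) := by
  obtain ⟨hEdges, -, hExhaustive⟩ := hE
  have hne : E.Nonempty := by
    obtain ⟨e, he, -⟩ := hExhaustive ⟨u, Λ.id u⟩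
    exact ⟨e, he⟩
  have comm : (↑E : Set (Λ.PathFrom u)).Pairwise fun e f =>
      Commute (t u u (Λ.id u) - KGraph.rangeProj t e) (t u u (Λ.id u) - KGraph.rangeProj t f) :=
    fun e _ f _ _ => ht.commute_vertex_sub_rangeProj hΛ e f
  refine ⟨comm, ?_⟩
  calc _ = t u u (Λ.id u) * E.noncommProd (fun e => t u u (Λ.id u) - KGraph.rangeProj t e) comm :=
        (ht.vertex_mul_noncommProd_of_nonempty hne comm).symm
    _ = ∑ F ∈ E.powerset, (-1 : A) ^ F.card * KGraph.minExtProj t F :=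
        ht.vertex_mul_noncommProd hΛ E comm
    _ = _ := ht.sum_powerset_minExtProj_eq hΛ hEdges

/-- For a finite exhaustive set `E ⊆ uΛ^1` and a Toeplitz–Cuntz–Krieger family
`{t_λ}` in a complex `*`-algebra, the factors `t_u - t_e t_e*` for `e ∈ E`
pairwise commute, and `∏_{e ∈ E}(t_u - t_e t_e*) = t_u + ∑_{∅≠J⊆{1,…,k}} (-1)^{|J|}
∑_{μ ∈ uΛ^{e_J}, μ(0,e_i) ∈ E ∀ i ∈ J} t_μ t_μ*`. -/
theorem statement17 {k : ℕ} (Λ : KGraph k) (hΛ : Λ.IsFinite)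
    (u : Λ.Obj) (E : Finset (Λ.PathFrom u))
    (hE : Λ.IsExhaustive u (↑E : Set (Λ.PathFrom u)))
    {A : Type} [Ring A] [Algebra ℂ A] [StarRing A] [StarModule ℂ A]
    (t : ∀ u v : Λ.Obj, Λ.Hom u v → A) (ht : IsTCKFamily Λ t) :
    ∃ comm : (↑E : Set (Λ.PathFrom u)).Pairwise fun e f =>
        Commute (t u u (Λ.id u) - t u e.1 e.2 * star (t u e.1 e.2))
          (t u u (Λ.id u) - t u f.1 f.2 * star (t u f.1 f.2)),
      E.noncommProd
          (fun e => t u u (Λ.id u) - t u e.1 e.2 * star (t u e.1 e.2)) comm =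
        t u u (Λ.id u) +
          ∑ J ∈ Finset.univ.filter fun J : Finset (Fin k) => J.Nonempty,
            (-1 : A) ^ J.card *
              ∑ᶠ μ ∈ {μ : Λ.PathFrom u |
                  Λ.deg μ.2 = ∑ i ∈ J, KGraph.gen k i ∧
                  ∀ i ∈ J, ∃ (x : Λ.Obj) (α : Λ.Hom u x) (β : Λ.Hom x μ.1),
                    Λ.deg α = KGraph.gen k i ∧ Λ.comp α β = μ.2 ∧
                      (⟨x, α⟩ : Λ.PathFrom u) ∈ E},
                t u μ.1 μ.2 * star (t u μ.1 μ.2) :=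
  statement17_general Λ hΛ u E hE t ht
end

section
/- Let d_1, d_2, a_1, a_2 be positive real numbers with a_1 d_2 = a_2 d_1, and let r_1, r_2 be real numbers with r_1 ≥ ln d_1, r_2 ≥ ln d_2, and r_1 = ln d_1 or r_2 = ln d_2. Suppose p_u, p_v ≥ 0 are real numbers satisfying 0 ≤ (1 − d_1 e^{−r_1})(1 − d_2 e^{−r_2}) p_u − (a_1 e^{−r_1} + a_2 e^{−r_2} − d_1 a_2 e^{−(r_1+r_2)}) p_v. Then p_v = 0. -/
/-!
Put `x = e^{-r₁}` and `y = e^{-r₂}`. At a critical inverse temperature one of `d₁x`, `d₂y`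
equals `1`, so the coefficient of `p_u` vanishes, while the coefficient of `p_v` collapses
to `a₁x` or (using `a₁d₂ = a₂d₁`) to `a₂y`, which is positive. Hence `p_v ≤ 0`.
-/

open Real

lemma mul_exp_neg_log {d : ℝ} (hd : 0 < d) : d * exp (-log d) = 1 := by
  rw [exp_neg, exp_log hd, mul_inv_cancel₀ hd.ne']

lemma vanishing_and_pos_of_critical {d₁ d₂ a₁ a₂ x y : ℝ} (ha₁ : 0 < a₁) (ha₂ : 0 < a₂)
    (hrel : a₁ * d₂ = a₂ * d₁) (hx : 0 < x) (hy : 0 < y) (h : d₁ * x = 1 ∨ d₂ * y = 1) :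
    (1 - d₁ * x) * (1 - d₂ * y) = 0 ∧ 0 < a₁ * x + a₂ * y - d₁ * a₂ * (x * y) := by
  rcases h with h | h
  · have hcoef : a₁ * x + a₂ * y - d₁ * a₂ * (x * y) = a₁ * x := by
      linear_combination (-(a₂ * y)) * h
    exact ⟨by rw [h, sub_self, zero_mul], by rw [hcoef]; exact mul_pos ha₁ hx⟩
  · have hcoef : a₁ * x + a₂ * y - d₁ * a₂ * (x * y) = a₂ * y := by
      linear_combination (-(a₁ * x)) * h + (x * y) * hrel
    exact ⟨by rw [h, sub_self, mul_zero], by rw [hcoef]; exact mul_pos ha₂ hy⟩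

theorem statement18_general (d₁ d₂ a₁ a₂ : ℝ)
    (hd₁ : 0 < d₁) (hd₂ : 0 < d₂) (ha₁ : 0 < a₁) (ha₂ : 0 < a₂)
    (hrel : a₁ * d₂ = a₂ * d₁)
    (r₁ r₂ : ℝ)
    (hcrit : r₁ = Real.log d₁ ∨ r₂ = Real.log d₂)
    (p_u p_v : ℝ) (hpv : 0 ≤ p_v)
    (hineq : 0 ≤ (1 - d₁ * Real.exp (-r₁)) * (1 - d₂ * Real.exp (-r₂)) * p_u -
      (a₁ * Real.exp (-r₁) + a₂ * Real.exp (-r₂) -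
        d₁ * a₂ * Real.exp (-(r₁ + r₂))) * p_v) :
    p_v = 0 := by
  have hcrit_exp : d₁ * exp (-r₁) = 1 ∨ d₂ * exp (-r₂) = 1 :=
    hcrit.imp (fun h : r₁ = log d₁ ↦ h ▸ mul_exp_neg_log hd₁)
      (fun h : r₂ = log d₂ ↦ h ▸ mul_exp_neg_log hd₂)
  obtain ⟨hlead, hcoef⟩ :=
    vanishing_and_pos_of_critical ha₁ ha₂ hrel (exp_pos _) (exp_pos _) hcrit_exp
  rw [neg_add, exp_add, hlead, zero_mul, zero_sub, neg_nonneg] at hineq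
  exact le_antisymm (nonpos_of_mul_nonpos_right hineq hcoef) hpv

/-- The numerical core of Lemma 4.2: if `d₁, d₂, a₁, a₂ > 0` with `a₁d₂ = a₂d₁`,
`r₁ ≥ ln d₁`, `r₂ ≥ ln d₂` with equality in at least one case, and `p_u, p_v ≥ 0`
satisfy `0 ≤ (1-d₁e^{-r₁})(1-d₂e^{-r₂})p_u - (a₁e^{-r₁} + a₂e^{-r₂} -
d₁a₂e^{-(r₁+r₂)})p_v`, then `p_v = 0`. -/
theorem statement18 (d₁ d₂ a₁ a₂ : ℝ)
    (hd₁ : 0 < d₁) (hd₂ : 0 < d₂) (ha₁ : 0 < a₁) (ha₂ : 0 < a₂)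
    (hrel : a₁ * d₂ = a₂ * d₁)
    (r₁ r₂ : ℝ) (hr₁ : Real.log d₁ ≤ r₁) (hr₂ : Real.log d₂ ≤ r₂)
    (hcrit : r₁ = Real.log d₁ ∨ r₂ = Real.log d₂)
    (p_u p_v : ℝ) (hpu : 0 ≤ p_u) (hpv : 0 ≤ p_v)
    (hineq : 0 ≤ (1 - d₁ * Real.exp (-r₁)) * (1 - d₂ * Real.exp (-r₂)) * p_u -
      (a₁ * Real.exp (-r₁) + a₂ * Real.exp (-r₂) -
        d₁ * a₂ * Real.exp (-(r₁ + r₂))) * p_v) :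
    p_v = 0 :=
  statement18_general d₁ d₂ a₁ a₂ hd₁ hd₂ ha₁ ha₂ hrel r₁ r₂ hcrit p_u p_v hpv hineq
end
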